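/- arXiv:2502.14674 — 15 statements merged into one kernel-verified Lean document; each statement's English description precedes it below -/
import Mathlib

section
/- Let q be a prime power with gcd(q,3)=1, i.e. q coprime to 3, and let α > β be positive integers. If gcd(α+β, q+1)=1, then the polynomial X^α + X^β + 1 has no roots in the set μ_{q+1} = {a ∈ F_{q^2}^* : a^{q+1} = 1}. -/
/-!
The Frobenius `x ↦ x ^ q` of `𝔽_{q²}` inverts every element of `μ_{q+1}`, so applying it to a root
`a` of `X^α + X^β + 1` gives `a^{-α} + a^{-β} + 1 = 0`; multiplied by `a^{α+β}` and compared with the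
original equation this yields `a^{α+β} = 1`. Together with `a^{q+1} = 1` and `gcd(α+β, q+1) = 1` this
forces `a = 1`, hence `3 = 0` in `𝔽_{q²}`, impossible as `q` is prime to 3.
-/

theorem pow_add_eq_one_of_pow_add_pow_add_one_eq_zero {R : Type*} [CommRing R] (φ : R →+* R)
    {a : R} (hφa : φ a * a = 1) {α β : ℕ} (h : a ^ α + a ^ β + 1 = 0) :
    a ^ (α + β) = 1 := by
  have hφ : φ a ^ α + φ a ^ β + 1 = 0 := by simpa using congrArg φ h
  have hα : φ a ^ α * a ^ α = 1 := by rw [← mul_pow, hφa, one_pow]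
  have hβ : φ a ^ β * a ^ β = 1 := by rw [← mul_pow, hφa, one_pow]
  linear_combination (a ^ α * a ^ β) * hφ - a ^ β * hα - a ^ α * hβ - h

namespace FiniteField

variable {F : Type*} [Field F] [Fintype F]

theorem exists_ringHom_apply_eq_pow_of_card_eq_pow {q e : ℕ} (hF : Fintype.card F = q ^ e)
    (he : e ≠ 0) : ∃ φ : F →+* F, ∀ x, φ x = x ^ q := by
  obtain ⟨n, hp, hcard⟩ := FiniteField.card F (ringChar F)
  have hq : q ∣ ringChar F ^ (n : ℕ) := hcard ▸ hF ▸ dvd_pow_self q he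
  obtain ⟨k, -, rfl⟩ := (Nat.dvd_prime_pow hp).1 hq
  have : Fact (ringChar F).Prime := ⟨hp⟩
  exact ⟨iterateFrobenius F (ringChar F) k, fun _ => rfl⟩

theorem natCast_ne_zero_of_coprime_card {m : ℕ} (hm : (Fintype.card F).Coprime m) :
    (m : F) ≠ 0 := by
  intro h
  have hcard := (CharP.cast_eq_zero_iff F (ringChar F) _).1 (FiniteField.cast_card_eq_zero F)
  have hm' := (CharP.cast_eq_zero_iff F (ringChar F) m).1 h
  exact CharP.ringChar_ne_one (Nat.eq_one_of_dvd_one (hm ▸ Nat.dvd_gcd hcard hm'))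

end FiniteField

theorem stmt_0_general (q α β : ℕ) (hq3 : Nat.Coprime q 3)
    (hgcd : Nat.gcd (α + β) (q + 1) = 1)
    (F : Type*) [Field F] [Fintype F] (hF : Fintype.card F = q ^ 2)
    (a : F) (hμ : a ^ (q + 1) = 1) :
    a ^ α + a ^ β + 1 ≠ 0 := by
  intro h
  obtain ⟨φ, hφ⟩ := FiniteField.exists_ringHom_apply_eq_pow_of_card_eq_pow hF two_ne_zero
  have hαβ : a ^ (α + β) = 1 :=
    pow_add_eq_one_of_pow_add_pow_add_one_eq_zero φ (by rw [hφ, ← pow_succ, hμ]) h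
  obtain rfl : a = 1 := (pow_eq_one_iff_of_coprime hgcd).1 ⟨hαβ, hμ⟩
  have h3 : ((3 : ℕ) : F) = 0 := by
    norm_num at h ⊢
    linear_combination h
  exact FiniteField.natCast_ne_zero_of_coprime_card (hF ▸ hq3.pow_left 2) h3

/-- If `q` is a prime power coprime to 3, `α > β > 0`, and `gcd(α+β, q+1) = 1`,
then `X^α + X^β + 1` has no roots in `μ_{q+1} ⊆ F_{q^2}^*`. -/
theorem stmt_0 (q α β : ℕ) (hq3 : Nat.Coprime q 3)
    (p n : ℕ) (hp : p.Prime) (hn : 0 < n) (hqpn : q = p ^ n)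
    (hβ : 0 < β) (hαβ : β < α)
    (hgcd : Nat.gcd (α + β) (q + 1) = 1)
    (F : Type*) [Field F] [Fintype F] (hF : Fintype.card F = q ^ 2)
    (a : F) (ha : a ≠ 0) (hμ : a ^ (q + 1) = 1) :
    a ^ α + a ^ β + 1 ≠ 0 :=
  stmt_0_general q α β hq3 hgcd F hF a hμ
end

section
/- Let q be a prime power with gcd(q,3)=1, and let α > β be positive integers. If gcd(3, q+1)=1, then the polynomial X^α + X^β + 1 has no roots in μ_{q+1}, the group of (q+1)-th roots of unity in F_{q^2}^*. -/
/-!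
For `q = p ^ n`, the `q`-power Frobenius inverts every element of `μ_{q+1}`, so a root `a`
gives two elements `s = a ^ α`, `t = a ^ β` of `μ_{q+1}` with `s + t + 1 = 0` and
`s⁻¹ + t⁻¹ + 1 = 0`. Hence `s t = 1` and `t` is a root of `X ^ 2 + X + 1`, so `t ^ 3 = 1`.
Since `gcd(3, q + 1) = 1` this forces `t = 1`, i.e. `3 = 0` in a field whose order `q ^ 2` is
prime to `3`.
-/

theorem inv_add_inv_add_one_eq_zero {K : Type*} [Field K] (p n : ℕ) [ExpChar K p] {x y : K}
    (hx : x ^ (p ^ n + 1) = 1) (hy : y ^ (p ^ n + 1) = 1) (h : x + y + 1 = 0) :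
    x⁻¹ + y⁻¹ + 1 = 0 := by
  have frobenius_eq_inv {z : K} (hz : z ^ (p ^ n + 1) = 1) : z ^ p ^ n = z⁻¹ :=
    eq_inv_of_mul_eq_one_left (by rwa [← pow_succ])
  rw [← frobenius_eq_inv hx, ← frobenius_eq_inv hy, ← one_pow (p ^ n), ← add_pow_expChar_pow,
    ← add_pow_expChar_pow, h, zero_pow (expChar_pow_pos K p n).ne']

theorem sq_add_self_add_one_eq_zero_of_inv {K : Type*} [Field K] {x y : K} (hx : x ≠ 0)
    (hy : y ≠ 0) (h : x + y + 1 = 0) (h' : x⁻¹ + y⁻¹ + 1 = 0) : y ^ 2 + y + 1 = 0 := by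
  have hxy : x * y = 1 := by
    field_simp at h'
    linear_combination h' - h
  linear_combination y * h - hxy

theorem eq_one_of_sq_add_self_add_one_eq_zero {R : Type*} [CommRing R] {t : R} {m : ℕ}
    (ht : t ^ 2 + t + 1 = 0) (hm : t ^ m = 1) (hcop : Nat.Coprime 3 m) : t = 1 := by
  have ht3 : t ^ 3 = 1 := by linear_combination (t - 1) * ht
  exact (pow_eq_one_iff_of_coprime hcop).mp ⟨ht3, hm⟩

theorem natCast_ne_zero_of_coprime_card {R : Type*} [CommRing R] [Nontrivial R] [Fintype R]
    {m : ℕ} (h : (Fintype.card R).Coprime m) : (m : R) ≠ 0 := by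
  have hcop : IsCoprime (Fintype.card R : R) m := by
    simpa using (Nat.isCoprime_iff_coprime.mpr h).map (Int.castRingHom R)
  rw [Nat.cast_card_eq_zero, isCoprime_zero_left] at hcop
  exact hcop.ne_zero

theorem stmt_1_general (q α β : ℕ) (hq3 : Nat.Coprime q 3)
    (p n : ℕ) (hp : p.Prime) (hqpn : q = p ^ n)
    (hgcd : Nat.gcd 3 (q + 1) = 1)
    (F : Type*) [Field F] [Fintype F] (hF : Fintype.card F = q ^ 2)
    (a : F) (hμ : a ^ (q + 1) = 1) :
    a ^ α + a ^ β + 1 ≠ 0 := by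
  have := Fact.mk hp
  have : CharP F p := charP_of_card_eq_prime_pow (f := n * 2) (by rw [hF, hqpn, pow_mul])
  have hunit (k : ℕ) : (a ^ k) ^ (p ^ n + 1) = 1 := by
    rw [← hqpn, ← pow_mul, mul_comm, pow_mul, hμ, one_pow]
  have hne (k : ℕ) : a ^ k ≠ 0 := pow_ne_zero k (by rintro rfl; simp at hμ)
  intro h
  have hinv := inv_add_inv_add_one_eq_zero p n (hunit α) (hunit β) h
  have hcube := sq_add_self_add_one_eq_zero_of_inv (hne α) (hne β) h hinv
  have hone := eq_one_of_sq_add_self_add_one_eq_zero hcube (hqpn ▸ hunit β) hgcd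
  rw [hone] at hcube
  refine natCast_ne_zero_of_coprime_card (m := 3) (by rw [hF]; exact hq3.pow_left 2) ?_
  linear_combination hcube

/-- If `q` is a prime power coprime to 3 and `α > β > 0`, then under the stated
gcd condition the polynomial `X^α + X^β + 1` has no roots in `μ_{q+1} ⊆ F_{q^2}^*`. -/
theorem stmt_1 (q α β : ℕ) (hq3 : Nat.Coprime q 3)
    (p n : ℕ) (hp : p.Prime) (hn : 0 < n) (hqpn : q = p ^ n)
    (hβ : 0 < β) (hαβ : β < α)
    (hgcd : Nat.gcd 3 (q + 1) = 1)
    (F : Type*) [Field F] [Fintype F] (hF : Fintype.card F = q ^ 2)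
    (a : F) (ha : a ≠ 0) (hμ : a ^ (q + 1) = 1) :
    a ^ α + a ^ β + 1 ≠ 0 :=
  stmt_1_general q α β hq3 p n hp hqpn hgcd F hF a hμ
end

section
/- Let q be a prime power with gcd(q,3)=1, and let α > β be positive integers. If gcd(|α−2β|, q+1)=1, then X^α + X^β + 1 has no roots in μ_{q+1}. -/
/-!
Since `q ^ 2 = |F|`, `q` is a power of the characteristic, so `x ↦ x ^ q` is a ring
endomorphism of `F`; it inverts every element of `μ_{q+1}`, so a root `a` gives, with
`u = a ^ α` and `v = a ^ β`, both `u + v + 1 = 0` and `u⁻¹ + v⁻¹ + 1 = 0`. Hence `u * v = 1`,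
so `u` and `v` are the two primitive cube roots of unity and `u = v ^ 2`, i.e.
`a ^ (α - 2β) = 1`. As the order of `a` divides `q + 1`, the gcd condition forces `a = 1`,
and then `3 = 0` in `F`, contradicting `gcd(q, 3) = 1`.
-/

theorem FiniteField.exists_ringHom_eq_pow_of_dvd_card {F : Type*} [Field F] [Fintype F] {q : ℕ}
    (hq : q ∣ Fintype.card F) : ∃ φ : F →+* F, ∀ x, φ x = x ^ q := by
  obtain ⟨p, hchar⟩ := CharP.exists F
  obtain ⟨n, hp, hcard⟩ := FiniteField.card F p
  obtain ⟨k, -, rfl⟩ := (Nat.dvd_prime_pow hp).1 (hcard ▸ hq)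
  have := ExpChar.prime (R := F) hp
  exact ⟨iterateFrobenius F p k, iterateFrobenius_def p k⟩

theorem Nat.Coprime.natCast_ne_zero_of_natCast_eq_zero {R : Type*} [NonAssocSemiring R]
    [Nontrivial R] {m n : ℕ} (hmn : m.Coprime n) (hm : (m : R) = 0) : (n : R) ≠ 0 := fun hn =>
  CharP.ringChar_ne_one (Nat.eq_one_of_dvd_coprimes hmn (ringChar.dvd hm) (ringChar.dvd hn))

theorem pow_eq_inv_of_pow_succ_eq_one {G : Type*} [DivisionMonoid G] {a : G} {q : ℕ}
    (h : a ^ (q + 1) = 1) : a ^ q = a⁻¹ :=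
  eq_inv_of_mul_eq_one_left (by rwa [← pow_succ])

theorem eq_sq_of_add_add_one_eq_zero_of_inv {K : Type*} [Field K] {u v : K} (hu : u ≠ 0)
    (hv : v ≠ 0) (h : u + v + 1 = 0) (hinv : u⁻¹ + v⁻¹ + 1 = 0) : u = v ^ 2 := by
  have huv : u * v = 1 := by
    field_simp at hinv
    linear_combination hinv - h
  linear_combination (1 - v) * h + huv

theorem eq_one_of_pow_eq_pow_of_gcd_eq_one {G : Type*} [Group G] {a : G} {m i j : ℕ}
    (hm : a ^ m = 1) (hij : a ^ i = a ^ j) (hgcd : Nat.gcd ((i : ℤ) - j).natAbs m = 1) :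
    a = 1 := by
  have hdiff : a ^ ((i : ℤ) - j) = 1 := by
    rw [zpow_sub, zpow_natCast, zpow_natCast, hij, mul_inv_cancel]
  simpa [hgcd] using pow_gcd_eq_one.2 ⟨pow_natAbs_eq_one.2 hdiff, hm⟩

theorem stmt_2_general (q α β : ℕ) (hq3 : Nat.Coprime q 3)
    (hgcd : Nat.gcd ((α : ℤ) - 2 * β).natAbs (q + 1) = 1)
    (F : Type*) [Field F] [Fintype F] (hF : Fintype.card F = q ^ 2)
    (a : F) (ha : a ≠ 0) (hμ : a ^ (q + 1) = 1) :
    a ^ α + a ^ β + 1 ≠ 0 := by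
  intro h
  obtain ⟨φ, hφ⟩ := FiniteField.exists_ringHom_eq_pow_of_dvd_card (q := q)
    (hF ▸ dvd_pow_self q two_ne_zero)
  have hconj : ∀ k : ℕ, φ (a ^ k) = (a ^ k)⁻¹ := fun k => by
    rw [hφ, ← pow_mul, mul_comm, pow_mul, pow_eq_inv_of_pow_succ_eq_one hμ, inv_pow]
  have hinv : (a ^ α)⁻¹ + (a ^ β)⁻¹ + 1 = 0 := by
    simpa only [map_add, map_one, map_zero, hconj] using congrArg φ h
  have hsq := eq_sq_of_add_add_one_eq_zero_of_inv (pow_ne_zero _ ha) (pow_ne_zero _ ha) h hinv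
  have hpow : a ^ α = a ^ (2 * β) := by rw [hsq, ← pow_mul, mul_comm]
  have ha1 : a = 1 := congrArg Units.val <|
    eq_one_of_pow_eq_pow_of_gcd_eq_one (a := Units.mk0 a ha) (i := α) (j := 2 * β)
      (by ext; simpa) (by ext; simpa using hpow) (by push_cast; exact hgcd)
  have h3 : ((3 : ℕ) : F) = 0 := by
    rw [ha1, one_pow, one_pow] at h
    push_cast
    linear_combination h
  have hq : (q : F) = 0 :=
    pow_eq_zero_iff two_ne_zero |>.1 (by exact_mod_cast hF ▸ FiniteField.cast_card_eq_zero F)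
  exact hq3.natCast_ne_zero_of_natCast_eq_zero hq h3

/-- If `q` is a prime power coprime to 3 and `α > β > 0`, then under the stated
gcd condition the polynomial `X^α + X^β + 1` has no roots in `μ_{q+1} ⊆ F_{q^2}^*`. -/
theorem stmt_2 (q α β : ℕ) (hq3 : Nat.Coprime q 3)
    (p n : ℕ) (hp : p.Prime) (hn : 0 < n) (hqpn : q = p ^ n)
    (hβ : 0 < β) (hαβ : β < α)
    (hgcd : Nat.gcd ((α : ℤ) - 2 * β).natAbs (q + 1) = 1)
    (F : Type*) [Field F] [Fintype F] (hF : Fintype.card F = q ^ 2)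
    (a : F) (ha : a ≠ 0) (hμ : a ^ (q + 1) = 1) :
    a ^ α + a ^ β + 1 ≠ 0 :=
  stmt_2_general q α β hq3 hgcd F hF a ha hμ
end

section
/- Let q be a prime power with gcd(q,3)=1, and let α > β be positive integers. If gcd(2α−β, q+1)=1, then X^α + X^β + 1 has no roots in μ_{q+1}. -/
/-!
Since `a ^ (q + 1) = 1`, the Frobenius `x ↦ x ^ q` sends `a` to `a⁻¹`, so `a⁻¹` is a root too.
Clearing denominators gives `a ^ (α - β) = a ^ β`, so `y = a ^ β` satisfies `y ^ 2 + y + 1 = 0`,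
whence `a ^ (2α - β) = y ^ 3 = 1`. With `a ^ (q + 1) = 1` and the gcd condition this forces
`a = 1`, and then `3 = 0` in `F`, impossible since the characteristic divides `q`.
-/

theorem natCast_ne_zero_of_coprime {R : Type*} [NonAssocSemiring R] [Nontrivial R] {m n : ℕ}
    (h : m.Coprime n) (hm : (m : R) = 0) : (n : R) ≠ 0 := fun hn ↦
  CharP.ringChar_ne_one <| Nat.eq_one_of_dvd_coprimes h (ringChar.dvd hm) (ringChar.dvd hn)

theorem inv_pow_add_inv_pow_add_one_eq_zero {F : Type*} [Field F] {p n : ℕ} [ExpChar F p]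
    {a : F} (hμ : a ^ (p ^ n + 1) = 1) {α β : ℕ} (h : a ^ α + a ^ β + 1 = 0) :
    a⁻¹ ^ α + a⁻¹ ^ β + 1 = 0 := by
  have ha : a ^ p ^ n = a⁻¹ := eq_inv_of_mul_eq_one_left (by rwa [← pow_succ])
  simpa only [map_add, map_pow, map_one, map_zero, iterateFrobenius_def, ha] using
    congrArg (iterateFrobenius F p n) h

theorem pow_two_mul_sub_eq_one_of_root_of_inv_root {K : Type*} [Field K] {x : K} (hx : x ≠ 0)
    {α β : ℕ} (hβα : β ≤ α) (h : x ^ α + x ^ β + 1 = 0) (h' : x⁻¹ ^ α + x⁻¹ ^ β + 1 = 0) :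
    x ^ (2 * α - β) = 1 := by
  obtain ⟨d, rfl⟩ := Nat.exists_eq_add_of_le' hβα
  rw [show 2 * (d + β) - β = d * 2 + β by omega, pow_add, pow_mul]
  rw [pow_add] at h
  rw [inv_pow, inv_pow, pow_add] at h'
  field_simp at h'
  linear_combination (x ^ β - 1) * h + (x ^ d * x ^ β + x ^ β) * (h' - h)

theorem stmt_3_general (q α β : ℕ) (hq3 : Nat.Coprime q 3)
    (p n : ℕ) (hp : p.Prime) (hqpn : q = p ^ n)
    (hαβ : β < α)
    (hgcd : Nat.gcd (2 * α - β) (q + 1) = 1)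
    (F : Type*) [Field F] [Fintype F] (hF : Fintype.card F = q ^ 2)
    (a : F) (ha : a ≠ 0) (hμ : a ^ (q + 1) = 1) :
    a ^ α + a ^ β + 1 ≠ 0 := by
  have : Fact p.Prime := ⟨hp⟩
  have : CharP F p := charP_of_card_eq_prime_pow (f := n * 2) (by rw [hF, hqpn, pow_mul])
  intro hroot
  have hinv := inv_pow_add_inv_pow_add_one_eq_zero (hqpn ▸ hμ) hroot
  have ha1 : a = 1 := (pow_eq_one_iff_of_coprime hgcd).1
    ⟨pow_two_mul_sub_eq_one_of_root_of_inv_root ha hαβ.le hroot hinv, hμ⟩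
  have hq0 : (q : F) = 0 := by simpa [hF] using Nat.cast_card_eq_zero F
  refine natCast_ne_zero_of_coprime hq3 hq0 ?_
  rw [ha1] at hroot
  linear_combination hroot

/-- If `q` is a prime power coprime to 3 and `α > β > 0`, then under the stated
gcd condition the polynomial `X^α + X^β + 1` has no roots in `μ_{q+1} ⊆ F_{q^2}^*`. -/
theorem stmt_3 (q α β : ℕ) (hq3 : Nat.Coprime q 3)
    (p n : ℕ) (hp : p.Prime) (hn : 0 < n) (hqpn : q = p ^ n)
    (hβ : 0 < β) (hαβ : β < α)
    (hgcd : Nat.gcd (2 * α - β) (q + 1) = 1)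
    (F : Type*) [Field F] [Fintype F] (hF : Fintype.card F = q ^ 2)
    (a : F) (ha : a ≠ 0) (hμ : a ^ (q + 1) = 1) :
    a ^ α + a ^ β + 1 ≠ 0 :=
  stmt_3_general q α β hq3 p n hp hqpn hαβ hgcd F hF a ha hμ
end

section
/- For h(X) ∈ F_{q^2}[X] and a positive integer r, the polynomial f(X) = X^r · h(X^{q-1}) permutes F_{q^2} if and only if gcd(r, q−1) = 1 and the map x ↦ x^r · h(x)^{q-1} permutes μ_{q+1}. -/
/-!
The `a`-th power map semiconjugates `f x = x ^ r * h (x ^ a)` to `g y = y ^ r * h y ^ a`, and it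
maps `Fˣ` onto `μ_b` when `a * b = |F| - 1`, since `Fˣ` is cyclic. If `f` permutes `F` then it fixes
`0`, so it permutes `Fˣ` and `g` maps `μ_b` onto itself. Conversely, if `g` permutes `μ_b`, then
`f x₁ = f x₂` forces `x₁ ^ a = x₂ ^ a` and then `x₁ ^ r = x₂ ^ r`, so `x₁ / x₂` is killed by the
coprime exponents `a` and `r`. If `d = gcd(r, a) > 1`, an element of prime order dividing `d` in
`Fˣ` (Cauchy) collides with `1` under `f`.
-/

open Function Set

theorem IsCyclic.exists_pow_eq_of_pow_eq_one {G : Type*} [Group G] [Finite G] [IsCyclic G]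
    {a b : ℕ} (hcard : Nat.card G = a * b) {y : G} (hy : y ^ b = 1) : ∃ x : G, x ^ a = y := by
  obtain ⟨g, hg⟩ := IsCyclic.exists_generator (α := G)
  obtain ⟨k, rfl⟩ : ∃ k : ℕ, g ^ k = y := mem_powers_iff_mem_zpowers.2 (hg y)
  have hb : b ≠ 0 := right_ne_zero_of_mul (hcard ▸ Nat.card_pos.ne')
  have hdvd : a * b ∣ k * b := by
    rw [← hcard, ← orderOf_eq_card_of_forall_mem_zpowers hg]
    exact orderOf_dvd_of_pow_eq_one (by rw [pow_mul, hy])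
  obtain ⟨c, rfl⟩ := (Nat.mul_dvd_mul_iff_right (Nat.pos_of_ne_zero hb)).1 hdvd
  exact ⟨g ^ c, by rw [← pow_mul, mul_comm]⟩

theorem semiconj_pow_mul_comp_pow {M : Type*} [CommMonoid M] (h : M → M) (a r : ℕ) :
    Semiconj (· ^ a) (fun x : M => x ^ r * h (x ^ a)) (fun y : M => y ^ r * h y ^ a) :=
  fun x => by simp only [mul_pow, ← pow_mul, mul_comm r a]

namespace FiniteField

variable {F : Type*} [Field F] [Fintype F] {a b r : ℕ}

theorem card_sub_one_ne_zero : Fintype.card F - 1 ≠ 0 :=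
  Nat.sub_ne_zero_of_lt Fintype.one_lt_card

theorem pow_pow_eq_one_of_mul_eq (hab : a * b = Fintype.card F - 1) {x : F} (hx : x ≠ 0) :
    (x ^ a) ^ b = 1 := by
  rw [← pow_mul, hab, pow_card_sub_one_eq_one x hx]

theorem exists_pow_eq_of_pow_eq_one (hab : a * b = Fintype.card F - 1) {y : F}
    (hy : y ^ b = 1) : ∃ x ≠ 0, x ^ a = y := by
  have hb : b ≠ 0 := right_ne_zero_of_mul (hab ▸ card_sub_one_ne_zero)
  obtain ⟨u, rfl⟩ := IsUnit.of_pow_eq_one hy hb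
  have hcard : Nat.card Fˣ = a * b := by rw [Nat.card_units, Nat.card_eq_fintype_card, hab]
  obtain ⟨v, rfl⟩ := IsCyclic.exists_pow_eq_of_pow_eq_one hcard (y := u) (by ext; simpa using hy)
  exact ⟨v, v.ne_zero, by simp⟩

variable {h : F → F}

theorem gcd_eq_one_of_injective_pow_mul_comp_pow (ha : a ∣ Fintype.card F - 1)
    (hf : Injective fun x : F => x ^ r * h (x ^ a)) : r.gcd a = 1 := by
  by_contra hd
  obtain ⟨p, hp, hpd⟩ := Nat.exists_prime_and_dvd hd
  have : Fact p.Prime := ⟨hp⟩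
  obtain ⟨ζ, hζ⟩ := exists_prime_orderOf_dvd_card' (G := Fˣ) p <| by
    rw [Nat.card_units, Nat.card_eq_fintype_card]
    exact hpd.trans ((Nat.gcd_dvd_right r a).trans ha)
  have hζ_pow : ∀ {m}, p ∣ m → (ζ : F) ^ m = 1 := fun hm =>
    orderOf_dvd_iff_pow_eq_one.1 (by rwa [orderOf_units, hζ])
  have hζ_one : (ζ : F) = 1 := hf <| by
    simp only [hζ_pow (hpd.trans (Nat.gcd_dvd_left r a)),
      hζ_pow (hpd.trans (Nat.gcd_dvd_right r a)), one_pow]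
  exact hp.one_lt.ne' (by rw [← hζ, ← orderOf_units, hζ_one, orderOf_one])

theorem bijOn_of_bijective_pow_mul_comp_pow (hab : a * b = Fintype.card F - 1) (hr : r ≠ 0)
    (hf : Bijective fun x : F => x ^ r * h (x ^ a)) :
    BijOn (fun y : F => y ^ r * h y ^ a) {y | y ^ b = 1} {y | y ^ b = 1} := by
  have hf0 : (0 : F) ^ r * h (0 ^ a) = 0 := by simp [hr]
  have hfx : ∀ x : F, x ≠ 0 → x ^ r * h (x ^ a) ≠ 0 := fun x hx h0 =>
    hx (hf.injective (h0.trans hf0.symm))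
  have hmaps : MapsTo (fun y : F => y ^ r * h y ^ a) {y | y ^ b = 1} {y | y ^ b = 1} := by
    intro y hy
    obtain ⟨x, hx, rfl⟩ := exists_pow_eq_of_pow_eq_one hab hy
    rw [mem_ofPred_eq, ← semiconj_pow_mul_comp_pow h a r x]
    exact pow_pow_eq_one_of_mul_eq hab (hfx x hx)
  refine ((toFinite _).surjOn_iff_bijOn_of_mapsTo hmaps).1 fun z hz => ?_
  obtain ⟨w, hw, rfl⟩ := exists_pow_eq_of_pow_eq_one hab hz
  obtain ⟨x, rfl⟩ := hf.surjective w
  have hx : x ≠ 0 := by rintro rfl; exact hw hf0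
  exact ⟨x ^ a, pow_pow_eq_one_of_mul_eq hab hx, (semiconj_pow_mul_comp_pow h a r x).symm⟩

theorem bijective_pow_mul_comp_pow_of_bijOn (hab : a * b = Fintype.card F - 1) (hr : r ≠ 0)
    (hco : r.gcd a = 1)
    (hg : BijOn (fun y : F => y ^ r * h y ^ a) {y | y ^ b = 1} {y | y ^ b = 1}) :
    Bijective fun x : F => x ^ r * h (x ^ a) := by
  obtain ⟨ha, hb⟩ := mul_ne_zero_iff.1 (hab ▸ card_sub_one_ne_zero (F := F))
  have hμ : ∀ x : F, x ≠ 0 → (x ^ a) ^ b = 1 := fun x hx => pow_pow_eq_one_of_mul_eq hab hx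
  have hh : ∀ y : F, y ^ b = 1 → h y ≠ 0 := fun y hy h0 => by
    simpa [h0, ha, hb] using hg.mapsTo hy
  have hf0 : ∀ x : F, x ^ r * h (x ^ a) = 0 ↔ x = 0 := fun x =>
    ⟨fun h0 => by_contra fun hx => mul_ne_zero (pow_ne_zero r hx) (hh _ (hμ x hx)) h0,
      fun hx => by simp [hx, hr]⟩
  have hsc := semiconj_pow_mul_comp_pow h a r
  refine Finite.injective_iff_bijective.1 fun x₁ x₂ heq => ?_
  rcases eq_or_ne x₂ 0 with rfl | hx₂
  · exact (hf0 x₁).1 (heq.trans ((hf0 0).2 rfl))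
  have hx₁ : x₁ ≠ 0 := fun h0 => hx₂ ((hf0 x₂).1 (heq.symm.trans ((hf0 x₁).2 h0)))
  have hpow_a : x₁ ^ a = x₂ ^ a := hg.injOn (hμ x₁ hx₁) (hμ x₂ hx₂) <|
    ((hsc x₁).symm.trans (congrArg (· ^ a) heq)).trans (hsc x₂)
  have hpow_r : x₁ ^ r = x₂ ^ r := by
    simp only [hpow_a] at heq
    exact mul_right_cancel₀ (hh _ (hμ x₂ hx₂)) heq
  rw [← div_eq_one_iff_eq hx₂, ← pow_eq_one_iff_of_coprime hco, div_pow, div_pow, hpow_r, hpow_a,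
    div_self (pow_ne_zero _ hx₂), div_self (pow_ne_zero _ hx₂)]
  exact ⟨rfl, rfl⟩

theorem bijective_pow_mul_comp_pow_iff (hab : a * b = Fintype.card F - 1) (hr : r ≠ 0) :
    Bijective (fun x : F => x ^ r * h (x ^ a)) ↔
      r.gcd a = 1 ∧ BijOn (fun y : F => y ^ r * h y ^ a) {y | y ^ b = 1} {y | y ^ b = 1} :=
  ⟨fun hf => ⟨gcd_eq_one_of_injective_pow_mul_comp_pow (Dvd.intro b hab) hf.injective,
      bijOn_of_bijective_pow_mul_comp_pow hab hr hf⟩,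
    fun ⟨hco, hg⟩ => bijective_pow_mul_comp_pow_of_bijOn hab hr hco hg⟩

end FiniteField

theorem stmt_4_general (q r : ℕ) (hr : 0 < r)
    (F : Type*) [Field F] [Fintype F] (hF : Fintype.card F = q ^ 2)
    (h : Polynomial F) :
    Function.Bijective (fun x : F => x ^ r * h.eval (x ^ (q - 1))) ↔
      (Nat.gcd r (q - 1) = 1 ∧
        Set.BijOn (fun x : F => x ^ r * (h.eval x) ^ (q - 1))
          {x : F | x ^ (q + 1) = 1} {x : F | x ^ (q + 1) = 1}) :=
  FiniteField.bijective_pow_mul_comp_pow_iff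
    (by simpa [hF, mul_comm] using (Nat.sq_sub_sq q 1).symm) hr.ne' (h := h.eval)

/-- For `h(X) ∈ F_{q^2}[X]`, `f(X) = X^r · h(X^{q-1})` permutes `F_{q^2}` iff
`gcd(r, q-1) = 1` and `x ↦ x^r · h(x)^{q-1}` permutes `μ_{q+1}`. -/
theorem stmt_4 (q r : ℕ) (hr : 0 < r)
    (p n : ℕ) (hp : p.Prime) (hn : 0 < n) (hqpn : q = p ^ n)
    (F : Type*) [Field F] [Fintype F] (hF : Fintype.card F = q ^ 2)
    (h : Polynomial F) :
    Function.Bijective (fun x : F => x ^ r * h.eval (x ^ (q - 1))) ↔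
      (Nat.gcd r (q - 1) = 1 ∧
        Set.BijOn (fun x : F => x ^ r * (h.eval x) ^ (q - 1))
          {x : F | x ^ (q + 1) = 1} {x : F | x ^ (q + 1) = 1}) :=
  stmt_4_general q r hr F hF h
end

section
/- Let q = p^m be a prime power and F(X) = X^r (X^{α(q−1)} + X^{β(q−1)} + 1) ∈ F_{q^2}[X], where α, β, r are positive integers. If gcd(α, β, r, q+1) ≠ 1, then F is not a permutation polynomial of F_{q^2}. -/
/-!
Let `d = gcd(α, β, r, q+1) ≠ 1`. Since `d ∣ q + 1 ∣ q² - 1 = |F_{q²}ˣ|`, there is a unit `ζ ≠ 1`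
with `ζ^d = 1`. As `d` divides `r`, `α(q-1)` and `β(q-1)`, every monomial of `F` takes the
value `1` at `ζ`, so `F(ζ) = F(1)`.
-/

theorem exists_ne_one_pow_eq_one_of_dvd_card {G : Type*} [Group G] [Finite G] {d : ℕ}
    (hd : d ≠ 1) (hdvd : d ∣ Nat.card G) : ∃ g : G, g ≠ 1 ∧ g ^ d = 1 := by
  have hprime := Nat.minFac_prime hd
  have : Fact d.minFac.Prime := ⟨hprime⟩
  obtain ⟨g, hg⟩ := exists_prime_orderOf_dvd_card' d.minFac ((Nat.minFac_dvd d).trans hdvd)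
  refine ⟨g, fun h => ?_, orderOf_dvd_iff_pow_eq_one.mp (hg ▸ Nat.minFac_dvd d)⟩
  rw [h, orderOf_one] at hg
  exact hprime.one_lt.ne hg

theorem add_one_dvd_card_units_of_card_eq_sq {F : Type*} [Field F] [Fintype F] {q : ℕ}
    (hF : Fintype.card F = q ^ 2) : q + 1 ∣ Nat.card Fˣ := by
  rw [Nat.card_units, Nat.card_eq_fintype_card, hF, ← one_pow 2, Nat.sq_sub_sq]
  exact dvd_mul_right _ _

theorem stmt_5_general (q α β r : ℕ)
    (hgcd : Nat.gcd (Nat.gcd α β) (Nat.gcd r (q + 1)) ≠ 1)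
    (F : Type*) [Field F] [Fintype F] (hF : Fintype.card F = q ^ 2) :
    ¬ Function.Bijective
        (fun x : F => x ^ r * (x ^ (α * (q - 1)) + x ^ (β * (q - 1)) + 1)) := by
  set d := Nat.gcd (Nat.gcd α β) (Nat.gcd r (q + 1))
  have hdα : d ∣ α := (Nat.gcd_dvd_left _ _).trans (Nat.gcd_dvd_left α β)
  have hdβ : d ∣ β := (Nat.gcd_dvd_left _ _).trans (Nat.gcd_dvd_right α β)
  have hdr : d ∣ r := (Nat.gcd_dvd_right _ _).trans (Nat.gcd_dvd_left r (q + 1))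
  have hdq : d ∣ q + 1 := (Nat.gcd_dvd_right _ _).trans (Nat.gcd_dvd_right r (q + 1))
  obtain ⟨ζ, hζ1, hζd⟩ := exists_ne_one_pow_eq_one_of_dvd_card hgcd
    (hdq.trans (add_one_dvd_card_units_of_card_eq_sq hF))
  have hζpow : ∀ k, d ∣ k → (ζ : F) ^ k = 1 := by
    rintro k ⟨c, rfl⟩
    rw [← Units.val_pow_eq_pow_val, pow_mul, hζd, one_pow, Units.val_one]
  intro hbij
  refine hζ1 (Units.ext (hbij.injective ?_))
  simp only [hζpow r hdr, hζpow _ (hdα.mul_right _), hζpow _ (hdβ.mul_right _), Units.val_one,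
    one_pow]

/-- If `gcd(α, β, r, q+1) ≠ 1` then `F(X) = X^r (X^{α(q-1)} + X^{β(q-1)} + 1)`
is not a permutation polynomial of `F_{q^2}`. -/
theorem stmt_5 (q α β r : ℕ)
    (p m : ℕ) (hp : p.Prime) (hm : 0 < m) (hqpm : q = p ^ m)
    (hα : 0 < α) (hβ : 0 < β) (hr : 0 < r)
    (hgcd : Nat.gcd (Nat.gcd α β) (Nat.gcd r (q + 1)) ≠ 1)
    (F : Type*) [Field F] [Fintype F] (hF : Fintype.card F = q ^ 2) :
    ¬ Function.Bijective
        (fun x : F => x ^ r * (x ^ (α * (q - 1)) + x ^ (β * (q - 1)) + 1)) :=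
  stmt_5_general q α β r hgcd F hF
end

section
/- Let m be a positive integer with gcd(5,m)=1 and let b ∈ F_{2^{10m}} satisfy b^{10} + b^6 + b^5 + b^3 + b^2 + b + 1 = 0. Then the relative trace Tr from F_{2^{10m}} to F_{2^{2m}} satisfies Tr(b) = 0, i.e. b + b^{2^{2m}} + b^{2^{4m}} + b^{2^{6m}} + b^{2^{8m}} = 0. -/
/-!
The minimal polynomial `X^10 + X^6 + X^5 + X^3 + X^2 + X + 1` of `b` is irreducible over `𝔽₂`,
so `b ∈ 𝔽_{2^10}` and `b^(2^k)` only depends on `k mod 10`. As `5 ∤ m`, the exponents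
`2m, 4m, 6m, 8m` run through `2, 4, 6, 8` modulo `10`, so `Tr_{2m}^{10m}(b)` equals the trace
`b + b^4 + b^16 + b^64 + b^256` of `b` from `𝔽_{2^10}` to `𝔽_4`, which vanishes by a direct
computation of the Frobenius orbit of `b`.
-/

theorem pow_pow_mul_eq_self {M : Type*} [Monoid M] {x : M} {p n : ℕ} (h : x ^ p ^ n = x)
    (q : ℕ) : x ^ p ^ (n * q) = x := by
  induction q with
  | zero => simp
  | succ q ih => rw [Nat.mul_succ, pow_add, pow_mul, ih, h]

theorem pow_pow_eq_pow_pow_mod {M : Type*} [Monoid M] {x : M} {p n : ℕ} (h : x ^ p ^ n = x)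
    (k : ℕ) : x ^ p ^ k = x ^ p ^ (k % n) := by
  conv_lhs => rw [← Nat.div_add_mod k n, pow_add, pow_mul, pow_pow_mul_eq_self h]

theorem sum_even_mul_mod_ten {M : Type*} [AddCommMonoid M] (f : ℕ → M) {m : ℕ}
    (hm : Nat.Coprime 5 m) :
    f (2 * m % 10) + f (4 * m % 10) + f (6 * m % 10) + f (8 * m % 10) = f 2 + f 4 + f 6 + f 8 := by
  have hm5 : ¬ 5 ∣ m := (Nat.Prime.coprime_iff_not_dvd Nat.prime_five).1 hm
  obtain h | h | h | h : m % 5 = 1 ∨ m % 5 = 2 ∨ m % 5 = 3 ∨ m % 5 = 4 := by omega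
  · rw [show 2 * m % 10 = 2 by omega, show 4 * m % 10 = 4 by omega,
      show 6 * m % 10 = 6 by omega, show 8 * m % 10 = 8 by omega]
  · rw [show 2 * m % 10 = 4 by omega, show 4 * m % 10 = 8 by omega,
      show 6 * m % 10 = 2 by omega, show 8 * m % 10 = 6 by omega]
    abel
  · rw [show 2 * m % 10 = 6 by omega, show 4 * m % 10 = 2 by omega,
      show 6 * m % 10 = 8 by omega, show 8 * m % 10 = 4 by omega]
    abel
  · rw [show 2 * m % 10 = 8 by omega, show 4 * m % 10 = 6 by omega,
      show 6 * m % 10 = 4 by omega, show 8 * m % 10 = 2 by omega]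
    abel

namespace Decic

variable {R : Type*} [CommRing R] [CharP R 2] {x : R}
  (hx : x ^ 10 + x ^ 6 + x ^ 5 + x ^ 3 + x ^ 2 + x + 1 = 0)
include hx

/- Repeated squaring: from `x^N = r` we get `x^(2N) - r^2 = (x^N + r) (x^N - r)`, and `r^2`
is reduced modulo the minimal polynomial of `x` over `𝔽₂`. -/

theorem pow_16_eq : x ^ 16 = x ^ 9 + x ^ 7 + x ^ 5 + x := by
  linear_combination (norm := (ring_nf; reduce_mod_char!)) (x ^ 6 + x ^ 2 + x) * hx

theorem pow_32_eq : x ^ 32 = x ^ 7 + x ^ 5 + x := by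
  linear_combination (norm := (ring_nf; reduce_mod_char!))
    (x ^ 16 + x ^ 9 + x ^ 7 + x ^ 5 + x) * pow_16_eq hx + (x ^ 8 + x ^ 3 + x) * hx

theorem pow_64_eq : x ^ 64 = x ^ 9 + x ^ 7 + x ^ 6 + x ^ 5 + x ^ 4 + x ^ 2 := by
  linear_combination (norm := (ring_nf; reduce_mod_char!))
    (x ^ 32 + x ^ 7 + x ^ 5 + x) * pow_32_eq hx + x ^ 4 * hx

theorem pow_128_eq : x ^ 128 = x ^ 3 + x := by
  linear_combination (norm := (ring_nf; reduce_mod_char!))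
    (x ^ 64 + x ^ 9 + x ^ 7 + x ^ 6 + x ^ 5 + x ^ 4 + x ^ 2) * pow_64_eq hx +
      (x ^ 8 + x ^ 3 + x ^ 2 + x) * hx

theorem pow_256_eq : x ^ 256 = x ^ 6 + x ^ 2 := by
  linear_combination (norm := (ring_nf; reduce_mod_char!)) (x ^ 128 + x ^ 3 + x) * pow_128_eq hx

theorem pow_512_eq : x ^ 512 = x ^ 8 + x ^ 7 + x ^ 5 + x ^ 3 + x ^ 2 := by
  linear_combination (norm := (ring_nf; reduce_mod_char!))
    (x ^ 256 + x ^ 6 + x ^ 2) * pow_256_eq hx + x ^ 2 * hx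

theorem pow_two_pow_ten_eq_self : x ^ 2 ^ 10 = x := by
  linear_combination (norm := (ring_nf; reduce_mod_char!))
    (x ^ 512 + x ^ 8 + x ^ 7 + x ^ 5 + x ^ 3 + x ^ 2) * pow_512_eq hx +
      (x ^ 6 + x ^ 4 + x ^ 2 + x) * hx

theorem add_pow_two_pow_even_eq_zero :
    x + x ^ 2 ^ 2 + x ^ 2 ^ 4 + x ^ 2 ^ 6 + x ^ 2 ^ 8 = 0 := by
  linear_combination (norm := (ring_nf; reduce_mod_char!))
    pow_16_eq hx + pow_64_eq hx + pow_256_eq hx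

end Decic

theorem stmt_6_general (m : ℕ) (h5 : Nat.gcd 5 m = 1)
    (F : Type*) [Field F] [Fintype F] (hF : Fintype.card F = 2 ^ (10 * m))
    (b : F) (hb : b ^ 10 + b ^ 6 + b ^ 5 + b ^ 3 + b ^ 2 + b + 1 = 0) :
    b + b ^ (2 ^ (2 * m)) + b ^ (2 ^ (4 * m)) + b ^ (2 ^ (6 * m)) + b ^ (2 ^ (8 * m)) = 0 := by
  have : CharP F 2 := charP_of_card_eq_prime_pow hF
  have hper := pow_pow_eq_pow_pow_mod (Decic.pow_two_pow_ten_eq_self hb)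
  rw [hper (2 * m), hper (4 * m), hper (6 * m), hper (8 * m)]
  linear_combination sum_even_mul_mod_ten (fun k ↦ b ^ 2 ^ k) h5 +
    Decic.add_pow_two_pow_even_eq_zero hb

/-- If `gcd(5,m)=1` and `b ∈ F_{2^{10m}}` satisfies
`b^10 + b^6 + b^5 + b^3 + b^2 + b + 1 = 0`, then `Tr_{2m}^{10m}(b) = 0`. -/
theorem stmt_6 (m : ℕ) (hm : 0 < m) (h5 : Nat.gcd 5 m = 1)
    (F : Type*) [Field F] [Fintype F] (hF : Fintype.card F = 2 ^ (10 * m))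
    (b : F) (hb : b ^ 10 + b ^ 6 + b ^ 5 + b ^ 3 + b ^ 2 + b + 1 = 0) :
    b + b ^ (2 ^ (2 * m)) + b ^ (2 ^ (4 * m)) + b ^ (2 ^ (6 * m)) + b ^ (2 ^ (8 * m)) = 0 :=
  stmt_6_general m h5 F hF b hb
end

section
/- Let q = 2^m with m a positive integer. If m ≡ 0 (mod 5), then the trinomial F(X) = X^{11}(X^{10(q−1)} + X^{4(q−1)} + 1) is not a permutation polynomial of F_{q^2}. -/
/-!
Write `F(x) = x ^ 11 * h(x ^ (q - 1))` with `h(z) = z ^ 10 + z ^ 4 + 1`. Multiplying `x` by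
`c ∈ μ_{q-1}` multiplies `F(x)` by `c ^ 11`. Since `m ≡ 0 (mod 5)`, `11 ∣ q ^ 2 - 1`.

If `11 ∣ q - 1`, a nontrivial `c ∈ μ_11 ⊆ μ_{q-1}` gives `F(c) = F(1)`.

If `11 ∣ q + 1`, pick `x` with `ζ = x ^ (q - 1)` of order `11`. On `μ_{q+1}` Frobenius acts as
inversion, and a direct computation modulo `ζ ^ 11 - 1` over `𝔽₂` shows that
`h(ζ) ^ (q - 1) = h(ζ ^ 3) ^ (q - 1)`, i.e. `F(x) ^ (q - 1) = F(x ^ 3) ^ (q - 1)`. Hence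
`F(x) / F(x ^ 3) ∈ 𝔽_q^×`, which is an `11`-th power `c ^ 11` there because `gcd(11, q - 1) = 1`;
then `F(c x ^ 3) = F(x)` although `(c x ^ 3) ^ (q - 1) = ζ ^ 3 ≠ ζ = x ^ (q - 1)`.
-/

open Function

def powMulCompPow {M : Type*} [Monoid M] (r n : ℕ) (h : M → M) (x : M) : M := x ^ r * h (x ^ n)

section CommMonoid

variable {M : Type*} [CommMonoid M] {r n : ℕ} {h : M → M}

lemma powMulCompPow_mul_left {c : M} (hc : c ^ n = 1) (x : M) :
    powMulCompPow r n h (c * x) = c ^ r * powMulCompPow r n h x := by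
  simp only [powMulCompPow, mul_pow, hc, one_mul, mul_assoc]

lemma powMulCompPow_pow (x : M) :
    powMulCompPow r n h x ^ n = (x ^ n) ^ r * h (x ^ n) ^ n := by
  rw [powMulCompPow, mul_pow, pow_right_comm]

lemma not_injective_powMulCompPow_of_pow_eq_one {c : M} (hcn : c ^ n = 1) (hcr : c ^ r = 1)
    (hc : c ≠ 1) : ¬ Injective (powMulCompPow r n h) := fun hinj =>
  hc <| mul_one c ▸ hinj (by rw [powMulCompPow_mul_left hcn, hcr, one_mul])

end CommMonoid

lemma not_injective_powMulCompPow_of_pow_eq_pow {G₀ : Type*} [CommGroupWithZero G₀] {r n : ℕ}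
    {h : G₀ → G₀} (hrn : r.Coprime n) {x y : G₀} (hxy : x ^ n ≠ y ^ n)
    (hy : powMulCompPow r n h y ≠ 0)
    (hpow : powMulCompPow r n h x ^ n = powMulCompPow r n h y ^ n) :
    ¬ Injective (powMulCompPow r n h) := by
  intro hinj
  set ρ := powMulCompPow r n h x / powMulCompPow r n h y
  have hρ : ρ ^ n = 1 := by rw [div_pow, hpow, div_self (pow_ne_zero _ hy)]
  obtain ⟨k, hk⟩ :=
    exists_pow_eq_self_of_coprime (hrn.coprime_dvd_right (orderOf_dvd_of_pow_eq_one hρ))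
  have hc : (ρ ^ k) ^ n = 1 := by rw [← pow_mul, mul_comm, pow_mul, hρ, one_pow]
  have hcy : ρ ^ k * y = x := hinj <| by
    rw [powMulCompPow_mul_left hc, ← pow_mul, mul_comm k r, pow_mul, hk, div_mul_cancel₀ _ hy]
  exact hxy (by rw [← hcy, mul_pow, hc, one_mul])

lemma not_injective_powMulCompPow_of_prime_dvd {K : Type*} [Field K] [Finite K] {r n : ℕ}
    {h : K → K} (hr : r.Prime) (hrn : r ∣ n) (hrK : r ∣ Nat.card Kˣ) :
    ¬ Injective (powMulCompPow r n h) := by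
  have : Fact r.Prime := ⟨hr⟩
  obtain ⟨c, hc⟩ := exists_prime_orderOf_dvd_card' r hrK
  refine not_injective_powMulCompPow_of_pow_eq_one (c := (c : K)) ?_ ?_ ?_
  · rwa [← orderOf_dvd_iff_pow_eq_one, orderOf_units, hc]
  · rw [← orderOf_dvd_iff_pow_eq_one, orderOf_units, hc]
  · rw [Ne, ← orderOf_eq_one_iff, orderOf_units, hc]
    exact hr.ne_one

lemma IsCyclic.exists_orderOf_pow_eq {G : Type*} [Group G] [IsCyclic G] [Finite G] {d n : ℕ}
    (h : d * n ∣ Nat.card G) : ∃ x : G, orderOf (x ^ n) = d := by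
  obtain ⟨g, hg⟩ := IsCyclic.exists_ofOrder_eq_natCard (α := G)
  obtain ⟨s, hs⟩ := h
  rw [← hg, mul_assoc, mul_comm n] at hs
  have hsn : s * n ≠ 0 := fun h0 => (orderOf_pos g).ne' (by rw [hs, h0, mul_zero])
  refine ⟨g ^ s, ?_⟩
  rw [← pow_mul, orderOf_pow_of_dvd hsn (hs ▸ dvd_mul_left _ _), hs,
    Nat.mul_div_cancel _ (Nat.pos_of_ne_zero hsn)]

lemma eleven_dvd_two_pow_sub_one {k : ℕ} (hk : 10 ∣ k) : 11 ∣ 2 ^ k - 1 := by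
  obtain ⟨j, rfl⟩ := hk
  exact (by norm_num : 11 ∣ 2 ^ 10 - 1).trans
    (by simpa only [one_pow, pow_mul] using Nat.sub_dvd_pow_sub_pow (2 ^ 10) 1 j)

section Trinomial

variable {K : Type*} [Field K]

def trinomialH (z : K) : K := z ^ 10 + z ^ 4 + 1

lemma trinomialH_pow_expChar_pow (p m : ℕ) [ExpChar K p] (z : K) :
    trinomialH z ^ p ^ m = trinomialH (z ^ p ^ m) := by
  simp only [trinomialH, add_pow_expChar_pow, one_pow, ← pow_mul, mul_comm]

variable [CharP K 2] {ζ : K}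

lemma trinomialH_ne_zero (hζ : ζ ^ 11 = 1) : trinomialH ζ ≠ 0 := by
  have h2 : (2 : K) = 0 := CharTwo.two_eq_zero
  -- the inverse of `h(ζ)` in `𝔽₂[ζ] / (ζ ^ 11 - 1)`
  refine left_ne_zero_of_mul_eq_one (b := ζ ^ 10 + ζ ^ 7 + ζ ^ 5 + ζ ^ 3 + ζ ^ 2 + ζ + 1) ?_
  rw [trinomialH]
  linear_combination (ζ^9 + ζ^6 + ζ^4 + ζ^3 + ζ^2 + ζ + 2) * hζ +
    (ζ^10 + ζ^9 + ζ^7 + ζ^6 + ζ^5 + ζ^4 + ζ^3 + ζ^2 + ζ + 1) * h2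

lemma trinomialH_pow_sub_one_eq (m : ℕ) (hζ : ζ ^ 11 = 1) (hζq : ζ ^ (2 ^ m + 1) = 1) :
    trinomialH ζ ^ (2 ^ m - 1) = trinomialH (ζ ^ 3) ^ (2 ^ m - 1) := by
  have h2 : (2 : K) = 0 := CharTwo.two_eq_zero
  have hζ0 : ζ ≠ 0 := by rintro rfl; simp at hζ
  have hfrob : ζ ^ 2 ^ m = ζ ^ 10 :=
    mul_right_cancel₀ hζ0 (by rw [← pow_succ, hζq, ← pow_succ, hζ])
  have hh : trinomialH ζ ≠ 0 := trinomialH_ne_zero hζ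
  have hh3 : trinomialH (ζ ^ 3) ≠ 0 := trinomialH_ne_zero (by rw [pow_right_comm, hζ, one_pow])
  have hq : 1 ≤ 2 ^ m := Nat.one_le_two_pow
  rw [pow_sub₀ _ hh hq, pow_sub₀ _ hh3 hq, trinomialH_pow_expChar_pow 2,
    trinomialH_pow_expChar_pow 2, pow_right_comm, hfrob, pow_one, pow_one, ← div_eq_mul_inv, ← div_eq_mul_inv,
    div_eq_div_iff hh hh3]
  simp only [trinomialH, ← pow_mul]
  norm_num [pow_eq_pow_mod 100 hζ, pow_eq_pow_mod 40 hζ, pow_eq_pow_mod 300 hζ,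
    pow_eq_pow_mod 120 hζ, pow_eq_pow_mod 30 hζ, pow_eq_pow_mod 12 hζ]
  linear_combination (-ζ^9 + ζ^4 - ζ^3 - ζ^2) * hζ + (ζ + ζ^8 - ζ^3 - ζ^10) * h2

lemma not_injective_powMulCompPow_trinomialH [Finite K] {m : ℕ}
    (hcard : Nat.card Kˣ = (2 ^ m - 1) * (2 ^ m + 1)) (h11 : 11 ∣ 2 ^ m + 1) :
    ¬ Injective (powMulCompPow 11 (2 ^ m - 1) (trinomialH : K → K)) := by
  have hcop : Nat.Coprime 11 (2 ^ m - 1) :=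
    (Nat.Prime.coprime_iff_not_dvd (by norm_num)).mpr (by generalize 2 ^ m = q at h11 ⊢; omega)
  obtain ⟨x, hx⟩ := IsCyclic.exists_orderOf_pow_eq (G := Kˣ) (d := 11) (n := 2 ^ m - 1)
    (by rw [hcard, mul_comm 11]; exact mul_dvd_mul_left _ h11)
  obtain ⟨ζ, hζ⟩ : ∃ ζ : K, (x : K) ^ (2 ^ m - 1) = ζ := ⟨_, rfl⟩
  have hζord : orderOf ζ = 11 := by rw [← hζ, ← Units.val_pow_eq_pow_val, orderOf_units, hx]
  have hζ11 : ζ ^ 11 = 1 := hζord ▸ pow_orderOf_eq_one ζ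
  have hζ3 : ((x : K) ^ 3) ^ (2 ^ m - 1) = ζ ^ 3 := by rw [pow_right_comm, hζ]
  have hζζ3 : ζ ≠ ζ ^ 3 := by
    intro h
    have hζ2 : ζ ^ 2 = 1 :=
      mul_left_cancel₀ (hζ ▸ pow_ne_zero _ x.ne_zero) (by linear_combination -h)
    have := orderOf_dvd_of_pow_eq_one hζ2
    rw [hζord] at this
    norm_num at this
  refine not_injective_powMulCompPow_of_pow_eq_pow hcop (x := (x : K)) (y := (x : K) ^ 3)
    (by rwa [hζ3, hζ]) ?_ ?_
  · refine mul_ne_zero (pow_ne_zero _ (pow_ne_zero _ x.ne_zero)) ?_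
    rw [hζ3]
    exact trinomialH_ne_zero (by rw [pow_right_comm, hζ11, one_pow])
  · rw [powMulCompPow_pow, powMulCompPow_pow, hζ, hζ3, pow_right_comm, hζ11, one_pow, one_mul,
      one_mul]
    exact trinomialH_pow_sub_one_eq m hζ11 (by rw [← orderOf_dvd_iff_pow_eq_one, hζord]; exact h11)

end Trinomial

theorem stmt_8_general (m q : ℕ) (hq : q = 2 ^ m) (h5 : m % 5 = 0)
    (F : Type*) [Field F] [Fintype F] (hF : Fintype.card F = q ^ 2) :
    ¬ Function.Bijective
        (fun x : F => x ^ 11 * (x ^ (10 * (q - 1)) + x ^ (4 * (q - 1)) + 1)) := by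
  subst hq
  have hF2 : Fintype.card F = 2 ^ (2 * m) := by rw [hF, ← pow_mul, mul_comm]
  have : Fact (Nat.Prime 2) := ⟨Nat.prime_two⟩
  have : CharP F 2 := charP_of_card_eq_prime_pow hF2
  have hcard : Nat.card Fˣ = (2 ^ m - 1) * (2 ^ m + 1) := by
    rw [Nat.card_units, Nat.card_eq_fintype_card, hF, mul_comm, ← Nat.sq_sub_sq, one_pow]
  have h11 : 11 ∣ (2 ^ m - 1) * (2 ^ m + 1) := by
    rw [← hcard, Nat.card_units, Nat.card_eq_fintype_card, hF2]
    exact eleven_dvd_two_pow_sub_one (by omega)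
  have hfun : (fun x : F => x ^ 11 * (x ^ (10 * (2 ^ m - 1)) + x ^ (4 * (2 ^ m - 1)) + 1)) =
      powMulCompPow 11 (2 ^ m - 1) trinomialH := by
    funext x
    simp only [powMulCompPow, trinomialH, ← pow_mul, mul_comm]
  rw [hfun]
  intro hbij
  rcases (Nat.Prime.dvd_mul (by norm_num)).mp h11 with h11 | h11
  · exact not_injective_powMulCompPow_of_prime_dvd (by norm_num) h11
      (hcard ▸ dvd_mul_of_dvd_left h11 _) hbij.injective
  · exact not_injective_powMulCompPow_trinomialH hcard h11 hbij.injective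

/-- Let `q = 2^m` with `m ≡ 0 (mod 5)`. Then
`F(X) = X^11 (X^{10(q-1)} + X^{4(q-1)} + 1)` is not a permutation of `F_{q^2}`. -/
theorem stmt_8 (m q : ℕ) (hm : 0 < m) (hq : q = 2 ^ m) (h5 : m % 5 = 0)
    (F : Type*) [Field F] [Fintype F] (hF : Fintype.card F = q ^ 2) :
    ¬ Function.Bijective
        (fun x : F => x ^ 11 * (x ^ (10 * (q - 1)) + x ^ (4 * (q - 1)) + 1)) :=
  stmt_8_general m q hq h5 F hF
end

section
/- Let q = 2^m with m odd and m not divisible by 3. Then the trinomial F(X) = X^7 (X^{7(q−1)} + X^{5(q−1)} + 1) is not a permutation polynomial of F_{q^2}. -/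
/-- Let `q = 2^m` with `m` odd and `3 ∤ m`. Then
`F(X) = X^7 (X^{7(q-1)} + X^{5(q-1)} + 1)` is not a permutation of `F_{q^2}`. -/
theorem stmt_10 (m q : ℕ) (hm : Odd m) (hm3 : ¬ (3 ∣ m)) (hq : q = 2 ^ m)
    (F : Type*) [Field F] [Fintype F] (hF : Fintype.card F = q ^ 2) :
    ¬ Function.Bijective
        (fun x : F => x ^ 7 * (x ^ (7 * (q - 1)) + x ^ (5 * (q - 1)) + 1)) := by
  classical
  intro hbij
  have hm0 : m ≠ 0 := by rintro rfl; exact absurd hm (by decide)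
  have hq2 : 2 ≤ q := by
    rw [hq]
    calc 2 = 2 ^ 1 := rfl
    _ ≤ 2 ^ m := Nat.pow_le_pow_right (by norm_num) (Nat.one_le_iff_ne_zero.mpr hm0)
  -- 3 ∣ q + 1
  have h3 : 3 ∣ q + 1 := by
    obtain ⟨k, hk⟩ := hm
    have hz : ((q + 1 : ℕ) : ZMod 3) = 0 := by
      subst hq hk
      push_cast
      rw [pow_add, pow_mul]
      have h4 : ((2 : ZMod 3) ^ 2) = 1 := by decide
      rw [h4, one_pow]
      decide
    exact (ZMod.natCast_eq_zero_iff _ _).mp hz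
  have hsq : (q + 1) * (q - 1) = q ^ 2 - 1 := by
    have := Nat.sq_sub_sq q 1
    simpa [pow_two] using this.symm
  obtain ⟨g, hg⟩ := IsCyclic.exists_generator (α := Fˣ)
  have hog : orderOf g = q ^ 2 - 1 := by
    rw [orderOf_eq_card_of_forall_mem_zpowers hg, Nat.card_eq_fintype_card,
      Fintype.card_units, hF]
  set t : ℕ := (q + 1) / 3 with ht
  have h3t : 3 * t = q + 1 := Nat.mul_div_cancel' h3
  set n : ℕ := t * (q - 1) with hn
  have h3n : 3 * n = q ^ 2 - 1 := by
    rw [hn, ← hsq, ← h3t]; ring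
  have h4 : 4 ≤ q ^ 2 := by
    calc 4 = 2 * 2 := rfl
    _ ≤ q * q := Nat.mul_le_mul hq2 hq2
    _ = q ^ 2 := (sq q).symm
  have key : 0 < n ∧ n < q ^ 2 - 1 := by
    revert h3n h4
    generalize q ^ 2 = Q
    intro h1 h2
    omega
  obtain ⟨hnpos, hnlt⟩ := key
  set w : Fˣ := g ^ n with hw
  have hw3 : w ^ 3 = 1 := by
    rw [hw, ← pow_mul, mul_comm, h3n, ← hog, pow_orderOf_eq_one]
  have hw1 : w ≠ 1 := by
    intro h
    have := orderOf_dvd_of_pow_eq_one (n := n) (x := g) h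
    rw [hog] at this
    exact absurd (Nat.le_of_dvd hnpos this) (not_le.mpr hnlt)
  have hw'3 : (w : F) ^ 3 = 1 := by
    rw [← Units.val_pow_eq_pow_val, hw3, Units.val_one]
  have hw'1 : (w : F) ≠ 1 := fun h => hw1 (Units.ext (by simpa using h))
  have hsum : (w : F) ^ 2 + (w : F) + 1 = 0 := by
    have hmul : ((w : F) - 1) * ((w : F) ^ 2 + (w : F) + 1) = 0 := by
      linear_combination hw'3
    rcases mul_eq_zero.mp hmul with h | h
    · exact absurd (sub_eq_zero.mp h) hw'1
    · exact h
  set α : F := (g : F) ^ t with hα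
  have hα0 : α ≠ 0 := pow_ne_zero _ (Units.ne_zero g)
  have hαq : α ^ (q - 1) = (w : F) := by
    rw [hα, ← pow_mul, hw, Units.val_pow_eq_pow_val, ← hn]
  have hval : α ^ 7 * (α ^ (7 * (q - 1)) + α ^ (5 * (q - 1)) + 1) = 0 := by
    have h7 : α ^ (7 * (q - 1)) = (w : F) := by
      rw [mul_comm, pow_mul, hαq]
      calc (w : F) ^ 7 = ((w : F) ^ 3) ^ 2 * (w : F) := by ring
      _ = (w : F) := by rw [hw'3]; ring
    have h5 : α ^ (5 * (q - 1)) = (w : F) ^ 2 := by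
      rw [mul_comm, pow_mul, hαq]
      calc (w : F) ^ 5 = ((w : F) ^ 3) * (w : F) ^ 2 := by ring
      _ = (w : F) ^ 2 := by rw [hw'3]; ring
    rw [h7, h5]
    have hz : (w : F) + (w : F) ^ 2 + 1 = 0 := by linear_combination hsum
    rw [hz, mul_zero]
  have h0 : (0 : F) ^ 7 * ((0 : F) ^ (7 * (q - 1)) + (0 : F) ^ (5 * (q - 1)) + 1) = 0 := by
    norm_num
  have := hbij.injective (a₁ := α) (a₂ := 0)
    (by show α ^ 7 * _ = (0:F) ^ 7 * _; rw [hval, h0])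
  exact hα0 this
end

section
/- Let q = 2^m with m odd, m > 1, and m not divisible by 5. There is no integer d with 1 ≤ d ≤ q^2−2 and gcd(d, q^2−1) = 1 such that the multisets {11, 4q+7, 10q+1} and {9d, (6q+3)d, (8q+1)d} coincide modulo q^2−1. -/
/-!
Work in `R = ℤ/(q² - 1)`, where `q² = 1`. Since `m` is odd, `3 ∣ q + 1 ∣ q² - 1`; reducing modulo
`3`, the exponent `11` is not divisible by `3` whereas `9d` and `(6q + 3)d` are, so `11` must be
matched with `(8q + 1)d`. Either of the two ways of matching the remaining pairs, combined with
`(8q + 1)d = 11` and `q² = 1`, gives `12 (q - 1) = 0` in `R`, i.e. `q + 1 ∣ 12`, which is impossible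
for an even `q > 2`.
-/

theorem Multiset.pair_eq_pair_iff {α : Type*} {a b c d : α} :
    ({a, b} : Multiset α) = {c, d} ↔ a = c ∧ b = d ∨ a = d ∧ b = c := by
  simp only [Multiset.insert_eq_cons, Multiset.cons_eq_cons, Multiset.singleton_eq_cons_iff,
    Multiset.singleton_inj]
  by_cases a = c <;> aesop

theorem Nat.sq_sub_one (q : ℕ) : q ^ 2 - 1 = (q + 1) * (q - 1) := by
  simpa using sq_tsub_sq q 1

theorem Multiset.map_natCast_eq_of_map_mod_eq {n : ℕ} {s t : Multiset ℕ}
    (h : s.map (· % n) = t.map (· % n)) :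
    s.map (Nat.cast : ℕ → ZMod n) = t.map Nat.cast := by
  simpa [Multiset.map_map, Function.comp_def, ZMod.natCast_mod] using
    congrArg (Multiset.map (Nat.cast : ℕ → ZMod n)) h

theorem ZMod.three_mul_ne_eleven {n : ℕ} (h : 3 ∣ n) (x : ZMod n) : 3 * x ≠ 11 := by
  intro hx
  have h3 := congrArg (ZMod.castHom h (ZMod 3)) hx
  rw [map_mul, map_ofNat, map_ofNat] at h3
  generalize ZMod.castHom h (ZMod 3) x = y at h3
  revert y
  decide

theorem ZMod.add_one_dvd_of_mul_sub_one_eq_zero {q c : ℕ} (hq : 2 ≤ q)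
    (h : (c : ZMod (q ^ 2 - 1)) * (q - 1) = 0) : q + 1 ∣ c := by
  have hdvd : q ^ 2 - 1 ∣ c * (q - 1) := by
    rwa [← ZMod.natCast_eq_zero_iff, Nat.cast_mul, Nat.cast_sub (by omega), Nat.cast_one]
  rw [Nat.sq_sub_one] at hdvd
  exact Nat.dvd_of_mul_dvd_mul_right (by omega) hdvd

theorem twelve_mul_sub_one_eq_zero_of_multiset_eq {R : Type*} [CommRing R] {q d : R}
    (hq : q ^ 2 = 1) (h3 : ∀ x : R, 3 * x ≠ 11)
    (h : ({11, 4 * q + 7, 10 * q + 1} : Multiset R) = {9 * d, (6 * q + 3) * d, (8 * q + 1) * d}) :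
    12 * (q - 1) = 0 := by
  have h11 : (8 * q + 1) * d = 11 := by
    have hmem : (11 : R) ∈ ({9 * d, (6 * q + 3) * d, (8 * q + 1) * d} : Multiset R) := by
      rw [← h]; simp
    simp only [Multiset.insert_eq_cons, Multiset.mem_cons, Multiset.mem_singleton] at hmem
    rcases hmem with h9 | h63 | h81
    · exact absurd (by rw [h9]; ring) (h3 (3 * d))
    · exact absurd (by rw [h63]; ring) (h3 ((2 * q + 1) * d))
    · exact h81.symm
  have hrest : ({4 * q + 7, 10 * q + 1} : Multiset R) = {9 * d, (6 * q + 3) * d} := by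
    rw [← Multiset.cons_inj_right (11 : R)]
    refine h.trans ?_
    rw [← h11, Multiset.pair_comm]
    exact Multiset.cons_swap _ _ _
  rcases Multiset.pair_eq_pair_iff.1 hrest with ⟨h9, h10⟩ | ⟨h63, -⟩
  · linear_combination (8 * q + 1) * h9 + (8 * q + 1) * h10 + (6 * q + 12) * h11 - 112 * hq
  · linear_combination -2 * (6 * q + 3) * h11 - 2 * (8 * q + 1) * h63 + 64 * hq

theorem stmt_11_general (m q : ℕ) (hm : Odd m) (hm1 : 1 < m)
    (hq : q = 2 ^ m) :
    ¬ ∃ d : ℕ, 1 ≤ d ∧ d ≤ q ^ 2 - 2 ∧ Nat.gcd d (q ^ 2 - 1) = 1 ∧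
      Multiset.map (· % (q ^ 2 - 1)) ({11, 4 * q + 7, 10 * q + 1} : Multiset ℕ) =
        Multiset.map (· % (q ^ 2 - 1))
          ({9 * d, (6 * q + 3) * d, (8 * q + 1) * d} : Multiset ℕ) := by
  rintro ⟨d, -, -, -, hmod⟩
  have hq4 : 4 ≤ q := by rw [hq]; exact Nat.pow_le_pow_right two_pos hm1
  have h3 : 3 ∣ q ^ 2 - 1 := by
    have h3q : 3 ∣ q + 1 := by simpa [hq] using hm.nat_add_dvd_pow_add_pow 2 1
    exact Nat.sq_sub_one q ▸ dvd_mul_of_dvd_left h3q _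
  have hqsq : (q : ZMod (q ^ 2 - 1)) ^ 2 = 1 := by
    have := ZMod.natCast_self (q ^ 2 - 1)
    rwa [Nat.cast_sub (by nlinarith), Nat.cast_pow, Nat.cast_one, sub_eq_zero] at this
  have hR := Multiset.map_natCast_eq_of_map_mod_eq hmod
  simp only [Multiset.insert_eq_cons, Multiset.map_cons, Multiset.map_singleton] at hR
  push_cast at hR
  have h12 : q + 1 ∣ 12 := ZMod.add_one_dvd_of_mul_sub_one_eq_zero (by omega) <| by
    exact_mod_cast twelve_mul_sub_one_eq_zero_of_multiset_eq hqsq (ZMod.three_mul_ne_eleven h3) hR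
  obtain ⟨k, rfl⟩ : 2 ∣ q := hq ▸ dvd_pow_self 2 (by omega)
  have hk2 : 2 ≤ k := by omega
  have hk5 : k ≤ 5 := by have := Nat.le_of_dvd (by norm_num) h12; omega
  interval_cases k <;> omega

/-- For `q = 2^m`, `m > 1` odd, `5 ∤ m`, there is no unit `d` modulo `q^2-1` with
`1 ≤ d ≤ q^2-2` matching the exponent multisets `{11, 4q+7, 10q+1}` and
`{9d, (6q+3)d, (8q+1)d}` modulo `q^2-1`. -/
theorem stmt_11 (m q : ℕ) (hm : Odd m) (hm1 : 1 < m) (hm5 : ¬ (5 ∣ m))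
    (hq : q = 2 ^ m) :
    ¬ ∃ d : ℕ, 1 ≤ d ∧ d ≤ q ^ 2 - 2 ∧ Nat.gcd d (q ^ 2 - 1) = 1 ∧
      Multiset.map (· % (q ^ 2 - 1)) ({11, 4 * q + 7, 10 * q + 1} : Multiset ℕ) =
        Multiset.map (· % (q ^ 2 - 1))
          ({9 * d, (6 * q + 3) * d, (8 * q + 1) * d} : Multiset ℕ) :=
  stmt_11_general m q hm hm1 hq
end

section
/- Let q = 2^m with m even, m not divisible by 3 and not divisible by 5. There is no integer d with 1 ≤ d < q^2−1 and gcd(d, q^2−1) = 1 such that the multisets {11, 4q+7, 10q+1} and {7d, (5q+2)d, 7qd} coincide modulo q^2−1. -/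
/-!
Both `7d` and `7qd` are congruent to one of `11, 4q+7, 10q+1` modulo `q² - 1`, and the second
is `q` times the first. Since `q² ≡ 1`, each of the nine resulting congruences collapses to
`c q ≡ c` for some `c ∈ {1, 3, 7, 9, 11}`, i.e. `q² - 1 ∣ c (q - 1)`, so `q + 1 ∣ c`.
For `q = 2^m` with `m` even and positive this forces `q = 4`, and `5` divides none of these `c`.
-/

lemma exists_natCast_mul_eq_of_mul_mem {R : Type*} [CommRing R] {q a b : R} (hq : q ^ 2 = 1)
    (ha : a ∈ ({11, 4 * q + 7, 10 * q + 1} : Multiset R))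
    (hb : b ∈ ({11, 4 * q + 7, 10 * q + 1} : Multiset R)) (hab : q * a = b) :
    ∃ c ∈ ({1, 3, 7, 9, 11} : Finset ℕ), (c : R) * q = c := by
  simp only [Multiset.insert_eq_cons, Multiset.mem_cons, Multiset.mem_singleton] at ha hb
  rcases ha with rfl | rfl | rfl <;> rcases hb with rfl | rfl | rfl
  · exact ⟨11, by decide, by push_cast; linear_combination hab⟩
  · exact ⟨7, by decide, by push_cast; linear_combination hab⟩
  · exact ⟨1, by decide, by push_cast; linear_combination hab⟩
  · exact ⟨7, by decide, by push_cast; linear_combination hab - 4 * hq⟩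
  · exact ⟨3, by decide, by push_cast; linear_combination hab - 4 * hq⟩
  · exact ⟨3, by decide, by push_cast; linear_combination -hab + 4 * hq⟩
  · exact ⟨1, by decide, by push_cast; linear_combination hab - 10 * hq⟩
  · exact ⟨3, by decide, by push_cast; linear_combination -hab + 10 * hq⟩
  · exact ⟨9, by decide, by push_cast; linear_combination -hab + 10 * hq⟩

lemma add_one_dvd_of_natCast_mul_eq {q c : ℕ} (hq : 2 ≤ q)
    (h : (c : ZMod (q ^ 2 - 1)) * q = c) : q + 1 ∣ c := by
  have hN : ((q ^ 2 - 1 : ℕ) : ℤ) = (q - 1 : ℤ) * (q + 1) := by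
    rw [Nat.cast_sub (Nat.one_le_pow _ _ (by omega))]; push_cast; ring
  have hdvd : ((q ^ 2 - 1 : ℕ) : ℤ) ∣ (q - 1 : ℤ) * c := by
    rw [← ZMod.intCast_zmod_eq_zero_iff_dvd]; push_cast; linear_combination h
  rw [hN] at hdvd
  exact_mod_cast Int.dvd_of_mul_dvd_mul_left (by omega) hdvd

lemma two_pow_add_one_not_dvd {m c : ℕ} (hm : 0 < m) (hme : Even m)
    (hc : c ∈ ({1, 3, 7, 9, 11} : Finset ℕ)) : ¬ 2 ^ m + 1 ∣ c := by
  intro hdvd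
  simp only [Finset.mem_insert, Finset.mem_singleton] at hc
  have hle : 2 ^ m ≤ 10 := by have := Nat.le_of_dvd (by omega) hdvd; omega
  have hm4 : m < 4 := by
    by_contra!
    have := Nat.pow_le_pow_right two_pos this
    omega
  obtain rfl : m = 2 := by interval_cases m <;> simp_all [Nat.even_iff]
  omega

theorem stmt_12_general (m q : ℕ) (hm : 0 < m) (hme : Even m)
    (hq : q = 2 ^ m) :
    ¬ ∃ d : ℕ, 1 ≤ d ∧ d < q ^ 2 - 1 ∧ Nat.gcd d (q ^ 2 - 1) = 1 ∧
      Multiset.map (· % (q ^ 2 - 1)) ({11, 4 * q + 7, 10 * q + 1} : Multiset ℕ) =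
        Multiset.map (· % (q ^ 2 - 1))
          ({7 * d, (5 * q + 2) * d, 7 * q * d} : Multiset ℕ) := by
  rintro ⟨d, -, -, -, hmul⟩
  have hq2 : 2 ≤ q := hq ▸ Nat.le_self_pow hm.ne' 2
  set N := q ^ 2 - 1
  have hqN : (q : ZMod N) ^ 2 = 1 := by
    have : q ^ 2 = N + 1 := (Nat.sub_add_cancel (Nat.one_le_pow _ _ (by omega))).symm
    rw [← Nat.cast_pow, this, Nat.cast_succ, ZMod.natCast_self, zero_add]
  have hcast := congrArg (Multiset.map (Nat.cast : ℕ → ZMod N)) hmul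
  simp only [ZMod.natCast_mod, Multiset.insert_eq_cons, Multiset.map_cons,
    Multiset.map_singleton] at hcast
  push_cast at hcast
  obtain ⟨c, hc, hcq⟩ := exists_natCast_mul_eq_of_mul_mem hqN
    (a := 7 * (d : ZMod N)) (b := 7 * q * d)
    (by simp [Multiset.insert_eq_cons, hcast]) (by simp [Multiset.insert_eq_cons, hcast]) (by ring)
  exact two_pow_add_one_not_dvd hm hme hc (hq ▸ add_one_dvd_of_natCast_mul_eq hq2 hcq)

/-- For `q = 2^m`, `m` even, `3 ∤ m`, `5 ∤ m`, there is no unit `d` modulo `q^2-1` with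
`1 ≤ d < q^2-1` matching the exponent multisets `{11, 4q+7, 10q+1}` and
`{7d, (5q+2)d, 7qd}` modulo `q^2-1`. -/
theorem stmt_12 (m q : ℕ) (hm : 0 < m) (hme : Even m) (hm3 : ¬ (3 ∣ m)) (hm5 : ¬ (5 ∣ m))
    (hq : q = 2 ^ m) :
    ¬ ∃ d : ℕ, 1 ≤ d ∧ d < q ^ 2 - 1 ∧ Nat.gcd d (q ^ 2 - 1) = 1 ∧
      Multiset.map (· % (q ^ 2 - 1)) ({11, 4 * q + 7, 10 * q + 1} : Multiset ℕ) =
        Multiset.map (· % (q ^ 2 - 1))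
          ({7 * d, (5 * q + 2) * d, 7 * q * d} : Multiset ℕ) :=
  stmt_12_general m q hm hme hq
end

section
/- Let q = 2^m. The rational map G(X) = (X^9 + X^6 + X^2)/(X^7 + X^3 + 1) on μ_{q+1}, conjugated by φ(X) = (X + ω^2)/(X + ω) where ω ∈ F_{q^2} \ F_q satisfies ω^2 + ω + 1 = 0, equals the rational map φ^{-1} ∘ G ∘ φ (X) = (X^9 + X^5 + X^4 + X^3 + X^2)/(X^8 + X^4 + X^2 + X + 1) as a rational function over F_{q^2}. -/
/-!
In characteristic 2, `ω ^ 2 = ω + 1`, so `φ x = 1 + 1 / (x + ω)` and `φ⁻¹ y = ω + 1 / (y + 1)`.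
Thus `φ⁻¹ ∘ G ∘ φ` is `conjMap`, the conjugate of `G` by `y ↦ 1 / (y + 1)` (which does not
involve `ω`), between two translations by `ω`. These cancel because
`conjMap (x + ω) = conjMap x + ω`: for the additive polynomial `L x = x ^ 4 + x`, which vanishes
at `ω`, we have `conjDen = L ^ 2 + L + 1` and `conjNum = x * conjDen + L`.
-/

section CommRing

variable {A : Type*} [CommRing A]

def conjNum (x : A) : A := x ^ 9 + x ^ 5 + x ^ 4 + x ^ 3 + x ^ 2

def conjDen (x : A) : A := x ^ 8 + x ^ 4 + x ^ 2 + x + 1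

variable [CharP A 2]

theorem pow_four_add_self_add_of_sq_add_add_one {ω : A} (hω : ω ^ 2 + ω + 1 = 0) (x : A) :
    (x + ω) ^ 4 + (x + ω) = x ^ 4 + x := by
  linear_combination (norm := (ring_nf; reduce_mod_char!)) (ω ^ 2 - ω) * hω

theorem conjDen_eq (x : A) : conjDen x = (x ^ 4 + x) ^ 2 + (x ^ 4 + x) + 1 := by
  unfold conjDen
  linear_combination (norm := (ring_nf; reduce_mod_char!))

theorem conjNum_eq (x : A) : conjNum x = x * conjDen x + (x ^ 4 + x) := by
  unfold conjNum conjDen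
  linear_combination (norm := (ring_nf; reduce_mod_char!))

theorem conjDen_add {ω : A} (hω : ω ^ 2 + ω + 1 = 0) (x : A) : conjDen (x + ω) = conjDen x := by
  rw [conjDen_eq, conjDen_eq, pow_four_add_self_add_of_sq_add_add_one hω]

theorem conjNum_add {ω : A} (hω : ω ^ 2 + ω + 1 = 0) (x : A) :
    conjNum (x + ω) = conjNum x + ω * conjDen x := by
  rw [conjNum_eq, conjNum_eq, conjDen_add hω, pow_four_add_self_add_of_sq_add_add_one hω]
  ring

end CommRing

section Field

variable {K : Type*} [Field K] [CharP K 2]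

def gMap (y : K) : K := (y ^ 9 + y ^ 6 + y ^ 2) / (y ^ 7 + y ^ 3 + 1)

def conjMap (x : K) : K := conjNum x / conjDen x

theorem conjMap_add {ω : K} (hω : ω ^ 2 + ω + 1 = 0) {x : K} (hx : conjDen x ≠ 0) :
    conjMap (x + ω) = conjMap x + ω := by
  rw [conjMap, conjMap, conjNum_add hω, conjDen_add hω, add_div, mul_div_cancel_right₀ _ hx]

theorem gMap_add_one_div_self_add_one {b : K} (hb : b ≠ 0) (hP : conjNum b ≠ 0) :
    gMap ((b + 1) / b) + 1 = conjDen b / conjNum b := by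
  have hnum : ((b + 1) / b) ^ 9 + ((b + 1) / b) ^ 6 + ((b + 1) / b) ^ 2 =
      ((b + 1) ^ 9 + (b + 1) ^ 6 * b ^ 3 + (b + 1) ^ 2 * b ^ 7) / b ^ 9 := by
    field_simp
  have hden : ((b + 1) / b) ^ 7 + ((b + 1) / b) ^ 3 + 1 = conjNum b / b ^ 9 := by
    unfold conjNum
    field_simp
    linear_combination (norm := (ring_nf; reduce_mod_char!))
  rw [gMap, hnum, hden, div_div_div_cancel_right₀ (pow_ne_zero 9 hb), div_add_one hP]
  congr 1
  unfold conjNum conjDen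
  linear_combination (norm := (ring_nf; reduce_mod_char!))

theorem mobius_inv_gMap_mobius {ω : K} (hω : ω ^ 2 + ω + 1 = 0) {x : K} (hb : x + ω ≠ 0)
    (hP : conjNum (x + ω) ≠ 0) (hQ : conjDen x ≠ 0) :
    (ω * gMap ((x + ω ^ 2) / (x + ω)) + ω ^ 2) / (gMap ((x + ω ^ 2) / (x + ω)) + 1) =
      conjMap x := by
  have hφ : (x + ω ^ 2) / (x + ω) = (x + ω + 1) / (x + ω) := by
    congr 1
    linear_combination (norm := (ring_nf; reduce_mod_char!)) hω
  have hy : gMap ((x + ω ^ 2) / (x + ω)) + 1 = conjDen (x + ω) / conjNum (x + ω) := by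
    rw [hφ, gMap_add_one_div_self_add_one hb hP]
  set y := gMap ((x + ω ^ 2) / (x + ω))
  have hy0 : y + 1 ≠ 0 := by
    rw [hy, conjDen_add hω]
    exact div_ne_zero hQ hP
  calc (ω * y + ω ^ 2) / (y + 1) = ω + 1 / (y + 1) := by
        field_simp
        linear_combination (norm := (ring_nf; reduce_mod_char!)) hω
    _ = ω + (conjMap x + ω) := by rw [hy, one_div_div, ← conjMap, conjMap_add hω hQ]
    _ = conjMap x := by rw [add_comm (conjMap x), CharTwo.add_cancel_left]

end Field

theorem Transcendental.aeval_ne_zero {R A : Type*} [CommRing R] [CommRing A] [Algebra R A]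
    {x : A} (hx : Transcendental R x) {p : Polynomial R} (hp : p ≠ 0) :
    Polynomial.aeval x p ≠ 0 :=
  fun h ↦ hp (transcendental_iff.mp hx p h)

open RatFunc in
theorem stmt_14_general (m q : ℕ) (hq : q = 2 ^ m)
    (F : Type*) [Field F] [Fintype F] (hF : Fintype.card F = q ^ 2)
    (ω : F) (hω : ω ^ 2 + ω + 1 = 0) :
    (let X : RatFunc F := RatFunc.X
     let w : RatFunc F := RatFunc.C ω
     let φ : RatFunc F := (X + w ^ 2) / (X + w)
     let Gφ : RatFunc F := (φ ^ 9 + φ ^ 6 + φ ^ 2) / (φ ^ 7 + φ ^ 3 + 1)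
     (w * Gφ + w ^ 2) / (Gφ + 1)) =
      (RatFunc.X ^ 9 + RatFunc.X ^ 5 + RatFunc.X ^ 4 + RatFunc.X ^ 3 + RatFunc.X ^ 2) /
        (RatFunc.X ^ 8 + RatFunc.X ^ 4 + RatFunc.X ^ 2 + RatFunc.X + 1) := by
  have : CharP F 2 := charP_of_card_eq_prime_pow (f := 2 * m) (by rw [hF, hq, ← pow_mul, mul_comm])
  have hw : C ω ^ 2 + C ω + 1 = 0 := by simpa using congrArg C hω
  have hX : Transcendental F (X : RatFunc F) := transcendental_X
  have hXw : Transcendental F (X + C ω : RatFunc F) := by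
    have h := hX.aeval (Polynomial.X + Polynomial.C ω)
      (by rw [Polynomial.natDegree_X_add_C]; exact one_ne_zero) (by simp)
    rwa [map_add, Polynomial.aeval_X, Polynomial.aeval_C, algebraMap_eq_C] at h
  refine mobius_inv_gMap_mobius hw ?_ ?_ ?_
  · simpa only [Polynomial.aeval_X] using hXw.aeval_ne_zero Polynomial.X_ne_zero
  · have h := hXw.aeval_ne_zero
      (p := Polynomial.X ^ 9 + Polynomial.X ^ 5 + Polynomial.X ^ 4 + Polynomial.X ^ 3 + Polynomial.X ^ 2)
      (Polynomial.Monic.ne_zero (by monicity!))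
    simp only [map_add, map_pow, Polynomial.aeval_X] at h
    exact h
  · have h := hX.aeval_ne_zero
      (p := Polynomial.X ^ 8 + Polynomial.X ^ 4 + Polynomial.X ^ 2 + Polynomial.X + 1)
      (Polynomial.Monic.ne_zero (by monicity!))
    simp only [map_add, map_pow, map_one, Polynomial.aeval_X] at h
    exact h

open RatFunc in
/-- Over `F_{q^2}` with `q = 2^m`, `m` odd, and `ω ∈ F_{q^2} \ F_q` with
`ω^2 + ω + 1 = 0`, the conjugate `φ⁻¹ ∘ G ∘ φ` of
`G(X) = (X^9+X^6+X^2)/(X^7+X^3+1)` by `φ(X) = (X+ω^2)/(X+ω)` equals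
`(X^9+X^5+X^4+X^3+X^2)/(X^8+X^4+X^2+X+1)` as a rational function. -/
theorem stmt_14 (m q : ℕ) (hm : Odd m) (hq : q = 2 ^ m)
    (F : Type*) [Field F] [Fintype F] [DecidableEq F] (hF : Fintype.card F = q ^ 2)
    (ω : F) (hω : ω ^ 2 + ω + 1 = 0) (hωq : ω ^ q ≠ ω) :
    (let X : RatFunc F := RatFunc.X
     let w : RatFunc F := RatFunc.C ω
     let φ : RatFunc F := (X + w ^ 2) / (X + w)
     let Gφ : RatFunc F := (φ ^ 9 + φ ^ 6 + φ ^ 2) / (φ ^ 7 + φ ^ 3 + 1)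
     (w * Gφ + w ^ 2) / (Gφ + 1)) =
      (RatFunc.X ^ 9 + RatFunc.X ^ 5 + RatFunc.X ^ 4 + RatFunc.X ^ 3 + RatFunc.X ^ 2) /
        (RatFunc.X ^ 8 + RatFunc.X ^ 4 + RatFunc.X ^ 2 + RatFunc.X + 1) :=
  stmt_14_general m q hq F hF ω hω
end

section
/- If m is a positive integer divisible by 7, then the polynomial X^7 + X^3 + X^2 + X + 1 splits completely over F_{2^m}, and consequently the map x ↦ (x^9 + x^5 + x^4 + x^3 + x^2)/(x^8 + x^4 + x^2 + x + 1) is not injective on F_{2^m} (its numerator x^2(x^7+x^3+x^2+x+1) has more than one root while the denominator is nonzero at those roots). -/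
/-!
In characteristic 2 a root `α` of `p = X^7 + X^3 + X^2 + X + 1` satisfies `α ^ 2 ^ 7 = α`,
which follows by squaring seven times and reducing modulo `p`. Applied to the root of `p` in
`AdjoinRoot p`, this gives `p ∣ X ^ 2 ^ m - X` whenever `7 ∣ m`, and over a field with `2 ^ m`
elements `X ^ 2 ^ m - X` splits, hence so does `p`. A root `a` of `p` is nonzero, and the numerator
`x ^ 2 * p(x)` of the rational map vanishes at both `a` and `0`.
-/

open Polynomial

theorem pow_two_pow_seven_eq_self_of_char_two {R : Type*} [CommRing R] (h2 : (2 : R) = 0)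
    {α : R} (hα : α ^ 7 + α ^ 3 + α ^ 2 + α + 1 = 0) : α ^ 2 ^ 7 = α := by
  have h8 : α ^ 8 = α ^ 4 + α ^ 3 + α ^ 2 + α := by
    linear_combination α * hα - (α ^ 4 + α ^ 3 + α ^ 2 + α) * h2
  have h16 : α ^ 16 = α ^ 6 + α ^ 3 + α := by
    linear_combination (α ^ 8 + α ^ 4 + α ^ 3 + α ^ 2 + α) * h8 + α * hα +
      (α ^ 7 + α ^ 6 + 2 * α ^ 5 + α ^ 4 - α) * h2
  have h32 : α ^ 32 = α ^ 5 + α ^ 4 + α ^ 2 + 1 := by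
    linear_combination (α ^ 16 + α ^ 6 + α ^ 3 + α) * h16 + (α ^ 5 + α + 1) * hα +
      (α ^ 9 - α ^ 8 - α ^ 5 - α ^ 3 - α ^ 2 - α - 1) * h2
  have h64 : α ^ 64 = α ^ 6 + α ^ 5 + α ^ 4 + α ^ 2 + α + 1 := by
    linear_combination (α ^ 32 + α ^ 5 + α ^ 4 + α ^ 2 + 1) * h32 + (α ^ 3 + α) * hα +
      (α ^ 9 + α ^ 7 - α ^ 3 - α) * h2
  linear_combination (α ^ 64 + α ^ 6 + α ^ 5 + α ^ 4 + α ^ 2 + α + 1) * h64 +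
    (α ^ 5 + α ^ 3 + 1) * hα +
    (α ^ 11 + α ^ 10 + α ^ 9 + α ^ 8 + α ^ 7 + 2 * α ^ 6 + α ^ 5 + α ^ 4 + α ^ 2) * h2

theorem pow_two_pow_eq_self_of_char_two_of_seven_dvd {R : Type*} [CommRing R]
    (h2 : (2 : R) = 0) {α : R} (hα : α ^ 7 + α ^ 3 + α ^ 2 + α + 1 = 0) {n : ℕ} (hn : 7 ∣ n) :
    α ^ 2 ^ n = α := by
  obtain ⟨k, rfl⟩ := hn
  induction k with
  | zero => simp
  | succ k ih =>
    rw [Nat.mul_succ, pow_add, pow_mul, ih, pow_two_pow_seven_eq_self_of_char_two h2 hα]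

theorem dvd_X_pow_two_pow_sub_X_of_char_two {R : Type*} [CommRing R] (h2 : (2 : R) = 0)
    {n : ℕ} (hn : 7 ∣ n) : (X ^ 7 + X ^ 3 + X ^ 2 + X + 1 : R[X]) ∣ X ^ 2 ^ n - X := by
  set p : R[X] := X ^ 7 + X ^ 3 + X ^ 2 + X + 1
  have h2' : (2 : AdjoinRoot p) = 0 := by
    rw [← map_ofNat (AdjoinRoot.of p) 2, h2, map_zero]
  have hroot : AdjoinRoot.root p ^ 7 + AdjoinRoot.root p ^ 3 + AdjoinRoot.root p ^ 2 +
      AdjoinRoot.root p + 1 = 0 := by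
    simpa only [p, map_add, map_pow, map_one, AdjoinRoot.mk_X] using AdjoinRoot.mk_self (f := p)
  rw [← AdjoinRoot.mk_eq_zero, map_sub, map_pow, AdjoinRoot.mk_X, sub_eq_zero]
  exact pow_two_pow_eq_self_of_char_two_of_seven_dvd h2' hroot hn

theorem FiniteField.splits_of_dvd_X_pow_card_sub_X {F : Type*} [Field F] [Fintype F] {p : F[X]}
    (hp : p ∣ X ^ Fintype.card F - X) : Splits p := by
  refine Splits.of_dvd ?_ (FiniteField.X_pow_card_sub_X_ne_zero F Fintype.one_lt_card) hp
  rw [splits_iff_card_roots, FiniteField.roots_X_pow_card_sub_X,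
    FiniteField.X_pow_card_sub_X_natDegree_eq F Fintype.one_lt_card]
  simp

open Polynomial in
theorem stmt_15_general (m : ℕ) (h7 : 7 ∣ m)
    (F : Type*) [Field F] [Fintype F] (hF : Fintype.card F = 2 ^ m) :
    Polynomial.Splits
        ((X ^ 7 + X ^ 3 + X ^ 2 + X + 1 : Polynomial F).map (RingHom.id F)) ∧
      ¬ Function.Injective (fun x : F =>
          (x ^ 9 + x ^ 5 + x ^ 4 + x ^ 3 + x ^ 2) /
            (x ^ 8 + x ^ 4 + x ^ 2 + x + 1)) := by
  have : CharP F 2 := charP_of_card_eq_prime_pow hF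
  have hsplits : Splits (X ^ 7 + X ^ 3 + X ^ 2 + X + 1 : F[X]) :=
    FiniteField.splits_of_dvd_X_pow_card_sub_X
      (hF ▸ dvd_X_pow_two_pow_sub_X_of_char_two CharTwo.two_eq_zero h7)
  refine ⟨by rwa [Polynomial.map_id], fun hinj => ?_⟩
  have hdeg : (X ^ 7 + X ^ 3 + X ^ 2 + X + 1 : F[X]).degree = 7 := by compute_degree!
  obtain ⟨a, ha⟩ := hsplits.exists_eval_eq_zero (by rw [hdeg]; decide)
  simp only [eval_add, eval_pow, eval_X, eval_one] at ha
  have ha0 : a ≠ 0 := by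
    rintro rfl
    simp at ha
  refine ha0 (hinj ?_)
  have hnum : a ^ 9 + a ^ 5 + a ^ 4 + a ^ 3 + a ^ 2 = 0 := by linear_combination a ^ 2 * ha
  simp [hnum]

open Polynomial in
/-- If `7 ∣ m`, then `X^7 + X^3 + X^2 + X + 1` splits completely over `F_{2^m}`,
and the map `x ↦ (x^9+x^5+x^4+x^3+x^2)/(x^8+x^4+x^2+x+1)` is not injective on `F_{2^m}`. -/
theorem stmt_15 (m : ℕ) (hm : 0 < m) (h7 : 7 ∣ m)
    (F : Type*) [Field F] [Fintype F] (hF : Fintype.card F = 2 ^ m) :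
    Polynomial.Splits
        ((X ^ 7 + X ^ 3 + X ^ 2 + X + 1 : Polynomial F).map (RingHom.id F)) ∧
      ¬ Function.Injective (fun x : F =>
          (x ^ 9 + x ^ 5 + x ^ 4 + x ^ 3 + x ^ 2) /
            (x ^ 8 + x ^ 4 + x ^ 2 + x + 1)) :=
  stmt_15_general m h7 F hF
end

section
/- Let q be a power of 2, Y an indeterminate, A = Y^8 + Y^4 + Y^3 + Y^2 + Y and B = Y^8 + Y^7 + Y^4 + Y^2 in F_q[Y]. Then the polynomial H(X,Y) = X^{16} + A X^8 + (B+1) X^4 + A X^2 + B X + A is absolutely irreducible over F_q, i.e., irreducible as a polynomial in the algebraic closure of F_q in two variables. -/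
/-!
Write `A, B ∈ K[Y]` for the two coefficient polynomials and `g = Z⁴ + A Z² + B Z + A`, which is
Eisenstein at `Y`. In characteristic 2, `X⁴ + X = (X² + X) ∘ (X² + X)`, so `H = g ∘ ℘ ∘ ℘` with
`℘ = X² + X`, and by Gauss's lemma it suffices to work over `F = K(Y)`. By Capelli's lemma,
`f ∘ ℘` is irreducible as soon as `f` is and a root `θ` of `f` is not of the form `w² + w` in
`F(θ)`.

For `f = g`: writing `w` in the basis `1, θ, θ², θ³`, the equation `w² + w = μθ` (`μ ∈ K×`) yields
`e⁴ + A e² + B e + εA + μ²B² = 0` with `e ∈ F`, `ε ∈ {0, 1}`. Such an `e` is integral over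
`K[Y]`, hence a polynomial of degree `≤ 4`, and comparing coefficients rules it out.
For `f = g ∘ ℘`: with `z² + z = θ`, writing `w = a + b z` forces `b² + b = 1`, so `b ∈ K` as `K` is
algebraically closed, and then `a² + a = b² θ` is the previous case.
-/

open Polynomial IntermediateField

theorem Polynomial.irreducible_comp_X_sq_add_X {K : Type*} [Field K] {f : K[X]} (hfm : f.Monic)
    (hf : Irreducible f) {M : Type*} [CommRing M] [Algebra K M] {y : M} (hy : aeval y f = 0)
    (h : ∀ v : M, v ^ 2 + v ≠ y) : Irreducible (f.comp (X ^ 2 + X)) := by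
  -- Capelli: `X² + X - x` must be irreducible over `K⟮x⟯`; a root would map to a solution in `M`
  refine irreducible_comp hfm (by monicity!) hf fun E _ _ x hx ↦ ?_
  have hint : IsIntegral K x := by
    by_contra hx'
    exact hf.ne_zero (hx ▸ minpoly.eq_zero hx')
  let pb := adjoin.powerBasis hint
  let φ : K⟮x⟯ →ₐ[K] M := pb.lift y (by rwa [adjoin.powerBasis_gen, minpoly_gen, hx])
  have hφ : φ (AdjoinSimple.gen K x) = y := by
    simpa [pb, adjoin.powerBasis_gen] using pb.lift_gen y _
  apply irreducible_of_degree_le_three_of_not_isRoot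
  · rw [Polynomial.map_add, Polynomial.map_pow, map_X, natDegree_sub_C,
      show (X ^ 2 + X : K⟮x⟯[X]).natDegree = 2 by compute_degree!]
    decide
  · intro w hw
    apply h (φ w)
    have : w ^ 2 + w = AdjoinSimple.gen K x := by
      simpa [sub_eq_zero] using hw
    rw [← map_pow, ← map_add, this, hφ]

theorem Polynomial.Monic.comp_X_sq_add_X {R : Type*} [CommRing R] [Nontrivial R] {f : R[X]}
    (hf : f.Monic) : (f.comp (X ^ 2 + X)).Monic :=
  hf.comp (by monicity!)
    (by rw [show (X ^ 2 + X : R[X]).natDegree = 2 by compute_degree!]; norm_num)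

theorem AdjoinRoot.exists_natDegree_lt_mk_eq {R : Type*} [CommRing R] [Nontrivial R] {g : R[X]}
    (hg : g.Monic) (hg1 : g ≠ 1) (v : AdjoinRoot g) :
    ∃ p : R[X], p.natDegree < g.natDegree ∧ mk g p = v := by
  obtain ⟨p, rfl⟩ := mk_surjective v
  exact ⟨p %ₘ g, natDegree_modByMonic_lt p hg hg1,
    by rw [← modByMonicHom_mk hg, mk_leftInverse hg]⟩

theorem AdjoinRoot.aeval_root_comp_X_sq_add_X {k : Type*} [CommRing k] [CharP k 2] (f : k[X]) :
    aeval (root (X ^ 2 + X + C (root f))) (f.comp (X ^ 2 + X)) = 0 := by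
  set y := root (X ^ 2 + X + C (root f))
  have two : (2 : AdjoinRoot (X ^ 2 + X + C (root f))) = 0 := by
    have := congrArg (algebraMap k (AdjoinRoot (X ^ 2 + X + C (root f))))
      (CharTwo.two_eq_zero : (2 : k) = 0)
    rwa [map_ofNat, map_zero] at this
  have hy : y ^ 2 + y = algebraMap (AdjoinRoot f) _ (root f) := by
    have := eval₂_root (X ^ 2 + X + C (root f))
    simp only [eval₂_add, eval₂_pow, eval₂_X, eval₂_C] at this
    rw [algebraMap_eq]
    linear_combination this - of _ (root f) * two
  rw [aeval_comp, show aeval y (X ^ 2 + X : k[X]) = y ^ 2 + y by simp, hy, aeval_algebraMap_apply,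
    aeval_eq, mk_self, map_zero]

theorem Polynomial.X_sq_add_X_comp_X_sq_add_X {R : Type*} [CommRing R] [CharP R 2] :
    (X ^ 2 + X : R[X]).comp (X ^ 2 + X) = X ^ 4 + X := by
  simp only [add_comp, pow_comp, X_comp, add_pow_char, ← pow_mul]
  linear_combination (X ^ 2 : R[X]) * (CharTwo.two_eq_zero : (2 : R[X]) = 0)

theorem AdjoinRoot.exists_coeffs_of_sq_add_self_eq {F : Type*} [Field F] [CharP F 2] {A B μ : F}
    {g : F[X]} (hg : g = X ^ 4 + C A * X ^ 2 + C B * X + C A) {v : AdjoinRoot g}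
    (hv : v ^ 2 + v = of g μ * root g) :
    ∃ c1 c2 c3 : F, c3 - B * c3 ^ 2 = 0 ∧
      c1 ^ 2 + c2 - A * (c2 ^ 2 - A * c3 ^ 2) - A * c3 ^ 2 = 0 ∧
      c1 - μ - B * (c2 ^ 2 - A * c3 ^ 2) = 0 := by
  have hdeg : g.natDegree = 4 := by rw [hg]; compute_degree!
  have hgm : g.Monic := by rw [hg]; monicity!
  obtain ⟨p, hpdeg, rfl⟩ := exists_natDegree_lt_mk_eq hgm (by rintro rfl; simp at hdeg) v
  rw [hdeg] at hpdeg
  have hp : p = C (p.coeff 3) * X ^ 3 + C (p.coeff 2) * X ^ 2 + C (p.coeff 1) * X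
      + C (p.coeff 0) := by
    conv_lhs => rw [p.as_sum_range' 4 hpdeg]
    simp only [Finset.sum_range_succ, Finset.sum_range_zero, ← C_mul_X_pow_eq_monomial]
    ring
  set c3 := p.coeff 3
  set c2 := p.coeff 2
  set c1 := p.coeff 1
  set c0 := p.coeff 0
  set D := C (c3 - B * c3 ^ 2) * X ^ 3
    + C (c1 ^ 2 + c2 - A * (c2 ^ 2 - A * c3 ^ 2) - A * c3 ^ 2) * X ^ 2
    + C (c1 - μ - B * (c2 ^ 2 - A * c3 ^ 2)) * X + C (c0 ^ 2 + c0 - A * (c2 ^ 2 - A * c3 ^ 2))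
    with hD
  have hrem : p ^ 2 + p - C μ * X - g * (C (c3 ^ 2) * X ^ 2 + C (c2 ^ 2 - A * c3 ^ 2)) = D := by
    rw [hD, hg, hp]
    simp only [add_pow_char, mul_pow, ← map_pow, map_add, map_sub, map_mul]
    ring
  have hzero : D = 0 := by
    by_contra hne
    refine mk_ne_zero_of_degree_lt hgm hne ?_ ?_
    · rw [degree_eq_natDegree hgm.ne_zero, hdeg]
      refine lt_of_le_of_lt (b := 3) ?_ (by norm_num)
      rw [hD]
      compute_degree
    rw [← hrem, map_sub, map_mul, mk_self, zero_mul, sub_zero, map_sub, map_add, map_pow, map_mul,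
      mk_C, mk_X, hv, sub_self]
  have hcoeff := fun k ↦ congrArg (coeff · k) hzero
  have e3 := hcoeff 3
  have e2 := hcoeff 2
  have e1 := hcoeff 1
  simp only [hD, coeff_add, coeff_C_mul, coeff_X_pow, coeff_X, coeff_C, coeff_zero] at e3 e2 e1
  norm_num at e3 e2 e1
  exact ⟨c1, c2, c3, e3, e2, e1⟩

theorem AdjoinRoot.exists_quartic_relation {F : Type*} [Field F] [CharP F 2] {A B μ : F}
    {g : F[X]} (hg : g = X ^ 4 + C A * X ^ 2 + C B * X + C A) {v : AdjoinRoot g}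
    (hv : v ^ 2 + v = of g μ * root g) :
    ∃ e ε : F, (ε = 0 ∨ ε = 1) ∧ e ^ 4 + A * e ^ 2 + B * e + ε * A + μ ^ 2 * B ^ 2 = 0 := by
  obtain ⟨c1, c2, c3, e3, e2, e1⟩ := exists_coeffs_of_sq_add_self_eq hg hv
  refine ⟨B * c2, B * c3, ?_, ?_⟩
  · rcases mul_eq_zero.mp (show B * c3 * (1 - B * c3) = 0 by linear_combination B * e3) with h | h
    · exact .inl h
    · exact .inr (by linear_combination -h)
  have hc1 : c1 ^ 2 = μ ^ 2 + B ^ 2 * c2 ^ 4 + A ^ 2 * B ^ 2 * c3 ^ 4 := by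
    rw [show c1 = μ + B * c2 ^ 2 + -(A * B * c3 ^ 2) by linear_combination e1, add_pow_char,
      add_pow_char, neg_sq]
    ring
  have two : (2 : F) = 0 := CharTwo.two_eq_zero
  -- `B² e2` with `c1²` substituted; `e3` says `B c3` is idempotent, which absorbs the `c3` terms
  linear_combination B ^ 2 * e2 - B ^ 2 * hc1 + (A * B + A ^ 2 * B ^ 2 * c3 * (B * c3 + 1)) * e3
    + (A * B ^ 2 * c2 ^ 2 + A * B ^ 2 * c3 ^ 2 - A ^ 2 * B ^ 2 * c3 ^ 2) * two

theorem IsAlgClosed.exists_algebraMap_eq_of_isIntegral {k L : Type*} [Field k] [IsAlgClosed k]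
    [CommRing L] [IsDomain L] [Algebra k L] {b : L} (hb : IsIntegral k b) :
    ∃ β : k, algebraMap k L β = b :=
  minpoly.mem_range_of_degree_eq_one k b (degree_eq_one_of_irreducible k (minpoly.irreducible hb))

theorem AdjoinRoot.sq_add_self_ne_root_of_forall {K L : Type*} [Field K] [IsAlgClosed K]
    [Field L] [CharP L 2] [Algebra K L] {θ : L}
    (h : ∀ μ : K, μ ≠ 0 → ∀ a : L, a ^ 2 + a ≠ algebraMap K L μ * θ)
    (v : AdjoinRoot (X ^ 2 + X + C θ)) : v ^ 2 + v ≠ root _ := by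
  have hq : (X ^ 2 + X + C θ).natDegree = 2 := by compute_degree!
  have hqm : (X ^ 2 + X + C θ).Monic := by monicity!
  obtain ⟨r, hrdeg, rfl⟩ := exists_natDegree_lt_mk_eq hqm (by rintro h; simp [h] at hq) v
  intro hv
  have hr := eq_X_add_C_of_natDegree_le_one (show r.natDegree ≤ 1 by omega)
  set b := r.coeff 1
  set a := r.coeff 0
  have hrem : r ^ 2 + r - X - (X ^ 2 + X + C θ) * C (b ^ 2)
      = C (b - 1 - b ^ 2) * X + C (a ^ 2 + a - θ * b ^ 2) := by
    rw [hr]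
    simp only [add_pow_char, mul_pow, ← map_pow, map_add, map_sub, map_mul, map_one]
    ring
  have hzero : C (b - 1 - b ^ 2) * X + C (a ^ 2 + a - θ * b ^ 2) = 0 := by
    by_contra hne
    refine mk_ne_zero_of_degree_lt hqm hne ?_ ?_
    · rw [degree_eq_natDegree hqm.ne_zero, hq]
      refine lt_of_le_of_lt (b := 1) ?_ (by norm_num)
      compute_degree
    rw [← hrem, map_sub, map_mul, mk_self, zero_mul, sub_zero, map_sub, map_add, map_pow, mk_X, hv,
      sub_self]
  have e1 := congrArg (coeff · 1) hzero
  have e0 := congrArg (coeff · 0) hzero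
  simp only [coeff_add, coeff_C_mul, coeff_X, coeff_C, coeff_zero] at e1 e0
  norm_num at e1 e0
  have hint : IsIntegral K b := by
    refine ⟨X ^ 2 + X + 1, by monicity!, ?_⟩
    simp only [eval₂_add, eval₂_pow, eval₂_X, eval₂_one]
    linear_combination -e1 + b * (CharTwo.two_eq_zero : (2 : L) = 0)
  obtain ⟨β, hβ⟩ := IsAlgClosed.exists_algebraMap_eq_of_isIntegral hint
  have hβ0 : β ≠ 0 := by
    rintro rfl
    simp [← hβ] at e1
  exact h _ (pow_ne_zero 2 hβ0) a (by rw [map_pow, hβ]; linear_combination e0)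

section

variable (K : Type*) [Field K]

noncomputable def polyA : K[X] := X ^ 8 + X ^ 4 + X ^ 3 + X ^ 2 + X

noncomputable def polyB : K[X] := X ^ 8 + X ^ 7 + X ^ 4 + X ^ 2

noncomputable def quarticAB : K[X][X] :=
  X ^ 4 + C (polyA K) * X ^ 2 + C (polyB K) * X + C (polyA K)

noncomputable def quarticRat : (RatFunc K)[X] := (quarticAB K).map (algebraMap K[X] (RatFunc K))

end

section

variable {K : Type*} [Field K]

lemma natDegree_polyA_le : (polyA K).natDegree ≤ 8 := by unfold polyA; compute_degree

lemma natDegree_polyB_le : (polyB K).natDegree ≤ 8 := by unfold polyB; compute_degree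

lemma natDegree_le_four_of_quartic_relation {ε c : K} {r : K[X]}
    (h : r ^ 4 + polyA K * r ^ 2 + polyB K * r + C ε * polyA K + C c * polyB K ^ 2 = 0) :
    r.natDegree ≤ 4 := by
  by_contra! hr
  set rest := polyA K * r ^ 2 + polyB K * r + C ε * polyA K + C c * polyB K ^ 2
  have hrest : rest.natDegree ≤ 2 * r.natDegree + 8 := by
    have hA := natDegree_polyA_le (K := K)
    have hB := natDegree_polyB_le (K := K)
    have hr2 := natDegree_pow_le (p := r) (n := 2)
    have hB2 := natDegree_pow_le_of_le 2 hB
    refine natDegree_add_le_of_degree_le (natDegree_add_le_of_degree_le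
      (natDegree_add_le_of_degree_le ?_ ?_) ?_) ?_
    · exact natDegree_mul_le.trans (by omega)
    · exact natDegree_mul_le.trans (by omega)
    · exact (natDegree_C_mul_le _ _).trans (by omega)
    · exact (natDegree_C_mul_le _ _).trans (by omega)
  have hsum : (r ^ 4 + rest).natDegree = 4 * r.natDegree := by
    rw [natDegree_add_eq_left_of_natDegree_lt (by rw [natDegree_pow]; omega), natDegree_pow]
  rw [show r ^ 4 + rest = 0 by linear_combination h, natDegree_zero] at hsum
  omega

lemma monic_quarticAB : (quarticAB K).Monic := by unfold quarticAB; monicity!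

lemma irreducible_quarticAB : Irreducible (quarticAB K) := by
  have hdeg : (quarticAB K).degree = 4 := by unfold quarticAB; compute_degree!
  refine irreducible_of_eisenstein_criterion ((Ideal.span_singleton_prime X_ne_zero).mpr prime_X)
    ?_ (fun n hn ↦ ?_) (by rw [hdeg]; norm_num) ?_ monic_quarticAB.isPrimitive
  · simp [monic_quarticAB.leadingCoeff, Ideal.mem_span_singleton, X_dvd_iff]
  · rw [hdeg, Nat.cast_lt_ofNat] at hn
    rw [Ideal.mem_span_singleton, X_dvd_iff]
    interval_cases n <;> simp [quarticAB, coeff_X, coeff_X_pow, coeff_C] <;> simp [polyA, polyB]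
  · rw [Ideal.span_singleton_pow, Ideal.mem_span_singleton, X_pow_dvd_iff]
    push Not
    exact ⟨1, by norm_num, by simp [quarticAB, coeff_X, coeff_X_pow, coeff_C]; simp [polyA]⟩

lemma monic_quarticRat : (quarticRat K).Monic := monic_quarticAB.map _

lemma irreducible_quarticRat : Irreducible (quarticRat K) :=
  monic_quarticAB.irreducible_iff_irreducible_map_fraction_map.mp irreducible_quarticAB

lemma quarticRat_eq : quarticRat K =
    X ^ 4 + C (algebraMap K[X] (RatFunc K) (polyA K)) * X ^ 2
      + C (algebraMap K[X] (RatFunc K) (polyB K)) * X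
      + C (algebraMap K[X] (RatFunc K) (polyA K)) := by
  simp [quarticRat, quarticAB]

variable [CharP K 2]

lemma quartic_relation_ne_zero (ε : K) {c : K} (hc : c ≠ 0) (r : K[X]) :
    r ^ 4 + polyA K * r ^ 2 + polyB K * r + C ε * polyA K + C c * polyB K ^ 2 ≠ 0 := by
  intro h
  have hr : r = C (r.coeff 4) * X ^ 4 + C (r.coeff 3) * X ^ 3 + C (r.coeff 2) * X ^ 2
      + C (r.coeff 1) * X + C (r.coeff 0) := by
    conv_lhs => rw [r.as_sum_range' 5 (Nat.lt_succ_of_le (natDegree_le_four_of_quartic_relation h))]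
    simp only [Finset.sum_range_succ, Finset.sum_range_zero, ← C_mul_X_pow_eq_monomial]
    ring
  rw [show r ^ 4 = (r ^ 2) ^ 2 by ring, hr] at h
  simp only [polyA, polyB, add_pow_char, mul_pow, ← pow_mul, ← map_pow, Nat.reduceMul] at h
  have hcoeff := fun k ↦ congrArg (coeff · k) h
  have h0 := hcoeff 0
  have h1 := hcoeff 1
  have h3 := hcoeff 3
  have h5 := hcoeff 5
  have h7 := hcoeff 7
  have h14 := hcoeff 14
  simp only [add_mul, mul_add, coeff_add, coeff_X_pow_mul', coeff_X_mul, coeff_C_mul, coeff_X_pow,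
    coeff_C, coeff_X, coeff_zero] at h0 h1 h3 h5 h7 h14
  norm_num at h0 h1 h3 h5 h7 h14
  exact hc (by linear_combination h14 - h7 + h5 - h3 + h1 + h0)

lemma quartic_relation_ne_zero_ratFunc (ε : K) {c : K} (hc : c ≠ 0) (e : RatFunc K) :
    e ^ 4 + algebraMap K[X] (RatFunc K) (polyA K) * e ^ 2
      + algebraMap K[X] (RatFunc K) (polyB K) * e
      + algebraMap K (RatFunc K) ε * algebraMap K[X] (RatFunc K) (polyA K)
      + algebraMap K (RatFunc K) c * algebraMap K[X] (RatFunc K) (polyB K) ^ 2 ≠ 0 := by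
  intro h
  simp only [IsScalarTower.algebraMap_apply K K[X] (RatFunc K), algebraMap_eq] at h
  have hint : IsIntegral K[X] e := by
    refine ⟨X ^ 4 + C (polyA K) * X ^ 2 + C (polyB K) * X + C (C ε * polyA K + C c * polyB K ^ 2),
      by monicity!, ?_⟩
    simp only [eval₂_add, eval₂_mul, eval₂_pow, eval₂_X, eval₂_C, map_add, map_mul, map_pow]
    linear_combination h
  obtain ⟨r, rfl⟩ := IsIntegrallyClosed.isIntegral_iff.mp hint
  refine quartic_relation_ne_zero ε hc r (IsFractionRing.injective K[X] (RatFunc K) ?_)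
  simp only [map_add, map_mul, map_pow, map_zero]
  linear_combination h

lemma sq_add_self_ne_mul_root {μ : K} (hμ : μ ≠ 0) (v : AdjoinRoot (quarticRat K)) :
    v ^ 2 + v ≠ algebraMap K _ μ * AdjoinRoot.root (quarticRat K) := by
  intro hv
  rw [IsScalarTower.algebraMap_apply K (RatFunc K), AdjoinRoot.algebraMap_eq] at hv
  obtain ⟨e, ε, hε, he⟩ := AdjoinRoot.exists_quartic_relation quarticRat_eq hv
  obtain ⟨ε₀, rfl⟩ : ∃ ε₀ : K, algebraMap K (RatFunc K) ε₀ = ε :=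
    hε.elim (fun h ↦ ⟨0, by rw [h, map_zero]⟩) (fun h ↦ ⟨1, by rw [h, map_one]⟩)
  exact quartic_relation_ne_zero_ratFunc ε₀ (pow_ne_zero 2 hμ) e
    (by rw [map_pow]; linear_combination he)

lemma sq_add_self_ne_tower_root [IsAlgClosed K]
    (v : AdjoinRoot (X ^ 2 + X + C (AdjoinRoot.root (quarticRat K)))) :
    v ^ 2 + v ≠ AdjoinRoot.root _ := by
  have := Fact.mk (irreducible_quarticRat (K := K))
  have : CharP (AdjoinRoot (quarticRat K)) 2 :=
    charP_of_injective_algebraMap (algebraMap (RatFunc K) _).injective 2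
  exact AdjoinRoot.sq_add_self_ne_root_of_forall (fun _ hμ a ↦ sq_add_self_ne_mul_root hμ a) v

lemma eq_quarticAB_comp :
    (X : K[X][X]) ^ 16 + C (X ^ 8 + X ^ 4 + X ^ 3 + X ^ 2 + X) * X ^ 8
      + C (X ^ 8 + X ^ 7 + X ^ 4 + X ^ 2 + 1) * X ^ 4
      + C (X ^ 8 + X ^ 4 + X ^ 3 + X ^ 2 + X) * X ^ 2
      + C (X ^ 8 + X ^ 7 + X ^ 4 + X ^ 2) * X + C (X ^ 8 + X ^ 4 + X ^ 3 + X ^ 2 + X)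
      = ((quarticAB K).comp (X ^ 2 + X)).comp (X ^ 2 + X) := by
  rw [comp_assoc, X_sq_add_X_comp_X_sq_add_X]
  simp only [quarticAB, polyA, polyB, add_comp, mul_comp, pow_comp, X_comp, C_comp]
  rw [show (X ^ 4 + X : K[X][X]) ^ 4 = ((X ^ 4 + X) ^ 2) ^ 2 by ring]
  simp only [add_pow_char, ← pow_mul, map_add, map_one]
  ring

lemma irreducible_quarticRat_comp : Irreducible ((quarticRat K).comp (X ^ 2 + X)) :=
  irreducible_comp_X_sq_add_X monic_quarticRat irreducible_quarticRat
    (by rw [AdjoinRoot.aeval_eq, AdjoinRoot.mk_self])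
    (fun v ↦ by simpa using sq_add_self_ne_mul_root one_ne_zero v)

end

open Polynomial in
/-- With `A = Y^8+Y^4+Y^3+Y^2+Y` and `B = Y^8+Y^7+Y^4+Y^2`, the polynomial
`H(X,Y) = X^16 + A X^8 + (B+1) X^4 + A X^2 + B X + A` is absolutely irreducible
over a field of characteristic 2, i.e. irreducible over the algebraic closure
(here: over any algebraically closed field `K` of characteristic 2, viewing
`H ∈ K[Y][X]`). -/
theorem stmt_16 (K : Type*) [Field K] [IsAlgClosed K] [CharP K 2] :
    Irreducible
      ((X : Polynomial (Polynomial K)) ^ 16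
        + C (X ^ 8 + X ^ 4 + X ^ 3 + X ^ 2 + X : Polynomial K) * X ^ 8
        + C ((X ^ 8 + X ^ 7 + X ^ 4 + X ^ 2 : Polynomial K) + 1) * X ^ 4
        + C (X ^ 8 + X ^ 4 + X ^ 3 + X ^ 2 + X : Polynomial K) * X ^ 2
        + C (X ^ 8 + X ^ 7 + X ^ 4 + X ^ 2 : Polynomial K) * X
        + C (X ^ 8 + X ^ 4 + X ^ 3 + X ^ 2 + X : Polynomial K)) := by
  rw [eq_quarticAB_comp, monic_quarticAB.comp_X_sq_add_X.comp_X_sq_add_X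
    |>.irreducible_iff_irreducible_map_fraction_map (K := RatFunc K), map_comp, map_comp]
  simp only [Polynomial.map_add, Polynomial.map_pow, map_X]
  exact irreducible_comp_X_sq_add_X monic_quarticRat.comp_X_sq_add_X irreducible_quarticRat_comp
    (AdjoinRoot.aeval_root_comp_X_sq_add_X _) sq_add_self_ne_tower_root
end

section
/- Let q be a power of 2 and A = Y^8+Y^4+Y^3+Y^2+Y, B = Y^8+Y^7+Y^4+Y^2 ∈ \bar{F_q}[Y]. Then the polynomial Z^4 + A Z^2 + B Z + A is irreducible over \bar{F_q}(Y). -/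
/-!
The polynomial is Eisenstein at the prime `Y` of `K[Y]`: `Y` divides `A` and `B`, while `Y²`
does not divide the constant term `A`, whose `Y`-coefficient is `1`. Hence it is irreducible
over `K[Y]`, and by Gauss's lemma (it is monic) also over `K(Y)`.
-/

open Polynomial

theorem Polynomial.mem_span_X_iff {R : Type*} [CommSemiring R] {p : R[X]} :
    p ∈ Ideal.span {X} ↔ p.coeff 0 = 0 := by
  rw [Ideal.mem_span_singleton, X_dvd_iff]

theorem Polynomial.notMem_span_X_sq_of_coeff_one_ne_zero {R : Type*} [CommSemiring R]
    {p : R[X]} (h : p.coeff 1 ≠ 0) : p ∉ Ideal.span {X} ^ 2 := by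
  rw [Ideal.span_singleton_pow, Ideal.mem_span_singleton, X_pow_dvd_iff]
  exact fun hp => h (hp 1 one_lt_two)

theorem Polynomial.natDegree_X_pow_four_add {R : Type*} [CommRing R] [Nontrivial R] (a b c : R) :
    (X ^ 4 + C a * X ^ 2 + C b * X + C c).natDegree = 4 := by
  compute_degree!

theorem Polynomial.isEisensteinAt_X_pow_four_add {R : Type*} [CommRing R] [Nontrivial R]
    {𝓟 : Ideal R} (h𝓟 : 𝓟 ≠ ⊤) {a b c : R} (ha : a ∈ 𝓟) (hb : b ∈ 𝓟) (hc : c ∈ 𝓟)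
    (hc2 : c ∉ 𝓟 ^ 2) : (X ^ 4 + C a * X ^ 2 + C b * X + C c).IsEisensteinAt 𝓟 := by
  refine Monic.isEisensteinAt_of_mem_of_notMem (by monicity!) h𝓟 (fun {n} hn => ?_) ?_
  · rw [natDegree_X_pow_four_add] at hn
    interval_cases n <;> simp [coeff_X, coeff_C, ha, hb, hc]
  · simpa using hc2

theorem Polynomial.Monic.irreducible_map_of_isEisensteinAt {R F : Type*} [CommRing R]
    [IsDomain R] [IsIntegrallyClosed R] [Field F] [Algebra R F] [IsFractionRing R F]
    {𝓟 : Ideal R} [𝓟.IsPrime] {f : R[X]} (hf : f.Monic) (hdeg : 0 < f.natDegree)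
    (he : f.IsEisensteinAt 𝓟) : Irreducible (f.map (algebraMap R F)) :=
  hf.irreducible_iff_irreducible_map_fraction_map.mp
    (he.irreducible inferInstance hf.isPrimitive hdeg)

open Polynomial in
theorem stmt_17_general (K : Type*) [Field K] :
    Irreducible
      ((X : Polynomial (RatFunc K)) ^ 4
        + C ((RatFunc.X : RatFunc K) ^ 8 + RatFunc.X ^ 4 + RatFunc.X ^ 3
              + RatFunc.X ^ 2 + RatFunc.X) * X ^ 2
        + C ((RatFunc.X : RatFunc K) ^ 8 + RatFunc.X ^ 7 + RatFunc.X ^ 4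
              + RatFunc.X ^ 2) * X
        + C ((RatFunc.X : RatFunc K) ^ 8 + RatFunc.X ^ 4 + RatFunc.X ^ 3
              + RatFunc.X ^ 2 + RatFunc.X)) := by
  set A : K[X] := X ^ 8 + X ^ 4 + X ^ 3 + X ^ 2 + X
  set B : K[X] := X ^ 8 + X ^ 7 + X ^ 4 + X ^ 2
  have hA : A ∈ Ideal.span {X} := mem_span_X_iff.mpr (by simp [A])
  have hB : B ∈ Ideal.span {X} := mem_span_X_iff.mpr (by simp [B])
  have hA2 : A ∉ Ideal.span {X} ^ 2 := notMem_span_X_sq_of_coeff_one_ne_zero (by simp [A])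
  have hY : (Ideal.span {(X : K[X])}).IsPrime :=
    (Ideal.span_singleton_prime X_ne_zero).mpr prime_X
  have hF := Monic.irreducible_map_of_isEisensteinAt (F := RatFunc K) (by monicity!)
    (by rw [natDegree_X_pow_four_add]; norm_num)
    (isEisensteinAt_X_pow_four_add hY.ne_top hA hB hA hA2)
  simpa [A, B, RatFunc.algebraMap_X] using hF

open Polynomial in
/-- With `A = Y^8+Y^4+Y^3+Y^2+Y` and `B = Y^8+Y^7+Y^4+Y^2` in `\bar{F_q}[Y]`, the
polynomial `Z^4 + A Z^2 + B Z + A` is irreducible over the rational function field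
`\bar{F_q}(Y)` (here: over `K(Y)` for any algebraically closed `K` of characteristic 2). -/
theorem stmt_17 (K : Type*) [Field K] [IsAlgClosed K] [CharP K 2] [DecidableEq K] :
    Irreducible
      ((X : Polynomial (RatFunc K)) ^ 4
        + C ((RatFunc.X : RatFunc K) ^ 8 + RatFunc.X ^ 4 + RatFunc.X ^ 3
              + RatFunc.X ^ 2 + RatFunc.X) * X ^ 2
        + C ((RatFunc.X : RatFunc K) ^ 8 + RatFunc.X ^ 7 + RatFunc.X ^ 4
              + RatFunc.X ^ 2) * X
        + C ((RatFunc.X : RatFunc K) ^ 8 + RatFunc.X ^ 4 + RatFunc.X ^ 3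
              + RatFunc.X ^ 2 + RatFunc.X)) :=
  stmt_17_general K
end
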